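/- arXiv:math/0702734 — 6 statements merged into one kernel-verified Lean document; each statement's English description precedes it below -/
import Mathlib

section
/- Let ĝ be a Lie algebra over ℂ and let 𝔤 be a Lie subalgebra of ĝ regarded as a Lie algebra over ℝ by restriction of scalars, and assume ĝ = 𝔤 + i•𝔤, i.e. every element of ĝ can be written as x + i•y with x, y ∈ 𝔤. Then 𝔪 := {x ∈ 𝔤 : i•x ∈ 𝔤} is closed under multiplication by i and is a Lie ideal of the complex Lie algebra ĝ; that is, 𝔪 is a ℂ-linear subspace of ĝ and [ζ, η] ∈ 𝔪 for every ζ ∈ ĝ and η ∈ 𝔪. -/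
/-- Let `L` (= ĝ) be a Lie algebra over `ℂ` and `g` (= 𝔤) a Lie subalgebra
of `L` over `ℝ` (restriction of scalars), with `ĝ = 𝔤 + i•𝔤`.  Then
`𝔪 := {x ∈ 𝔤 : i • x ∈ 𝔤}` is closed under multiplication by `i` and is a Lie ideal of the
complex Lie algebra `ĝ`: it is a `ℂ`-linear subspace of `ĝ` and `⁅ζ, η⁆ ∈ 𝔪` for every
`ζ ∈ ĝ` and `η ∈ 𝔪`. -/
theorem stmt1 {L : Type*} [LieRing L] [LieAlgebra ℂ L] [LieAlgebra ℝ L]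
    [IsScalarTower ℝ ℂ L] (g : LieSubalgebra ℝ L)
    (hspan : ∀ z : L, ∃ x ∈ g, ∃ y ∈ g, z = x + Complex.I • y) :
    ∃ m : Submodule ℂ L,
      (m : Set L) = {x : L | x ∈ g ∧ Complex.I • x ∈ g} ∧
      (∀ x ∈ m, Complex.I • x ∈ m) ∧
      ∀ ζ : L, ∀ η ∈ m, ⁅ζ, η⁆ ∈ m := by
  have hre : ∀ (a : ℝ) (x : L), (a : ℂ) • x = a • x := fun a x => by
    rw [← IsScalarTower.algebraMap_smul ℂ a x]; norm_num
  have hsmul : ∀ (c : ℂ) (x : L), x ∈ g → Complex.I • x ∈ g → c • x ∈ g := by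
    intro c x hx hIx
    have : c • x = c.re • x + c.im • (Complex.I • x) := by
      rw [← hre, ← hre, smul_smul, ← add_smul]
      congr 1
      simp [Complex.ext_iff]
    rw [this]
    exact g.add_mem (g.smul_mem _ hx) (g.smul_mem _ hIx)
  have hI2 : ∀ x : L, Complex.I • Complex.I • x = -x := by
    intro x
    rw [smul_smul, Complex.I_mul_I, neg_one_smul]
  refine ⟨{ carrier := {x : L | x ∈ g ∧ Complex.I • x ∈ g},
            add_mem' := ?_, zero_mem' := ?_, smul_mem' := ?_ }, rfl, ?_, ?_⟩
  · rintro a b ⟨ha, hIa⟩ ⟨hb, hIb⟩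
    exact ⟨g.add_mem ha hb, by rw [smul_add]; exact g.add_mem hIa hIb⟩
  · simp
  · rintro c x ⟨hx, hIx⟩
    refine ⟨hsmul c x hx hIx, ?_⟩
    rw [smul_comm]
    exact hsmul c _ hIx (by rw [smul_comm, hI2]; exact g.neg_mem hx)
  · rintro x ⟨hx, hIx⟩
    exact ⟨hIx, by rw [hI2]; exact g.neg_mem hx⟩
  · rintro ζ η ⟨hη, hIη⟩
    obtain ⟨x, hx, y, hy, rfl⟩ := hspan ζ
    have h1 : ⁅x, η⁆ ∈ g := g.lie_mem hx hη
    have h2 : ⁅y, η⁆ ∈ g := g.lie_mem hy hη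
    have hlie : ⁅x + Complex.I • y, η⁆ = ⁅x, η⁆ + Complex.I • ⁅y, η⁆ := by
      rw [add_lie, smul_lie]
    constructor
    · rw [hlie]
      refine g.add_mem h1 ?_
      have : Complex.I • ⁅y, η⁆ = ⁅y, Complex.I • η⁆ := by rw [lie_smul]
      rw [this]; exact g.lie_mem hy hIη
    · rw [hlie, smul_add]
      refine g.add_mem ?_ ?_
      · have : Complex.I • ⁅x, η⁆ = ⁅x, Complex.I • η⁆ := by rw [lie_smul]
        rw [this]; exact g.lie_mem hx hIη
      · rw [hI2]; exact g.neg_mem h2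
end

section
/- Let ĝ be a finite-dimensional Lie algebra over ℂ and let 𝔤 be a Lie subalgebra of ĝ regarded as a Lie algebra over ℝ by restriction of scalars, with ĝ = 𝔤 + i•𝔤. Let 𝔪 := {x ∈ 𝔤 : i•x ∈ 𝔤} (a ℂ-linear ideal of ĝ). If dim_ℂ ĝ ≤ dim_ℂ 𝔪 + 2, then every ℂ-Lie subalgebra ŝ of ĝ which is a semisimple Lie algebra satisfies ŝ ⊆ 𝔪; in particular ŝ ⊆ 𝔤. -/
lemma aux_span_pair {K V : Type*} [Field K] [AddCommGroup V] [Module K V]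
    [FiniteDimensional K V] (h : Module.finrank K V ≤ 2) :
    ∃ u v : V, ∀ q : V, q ∈ Submodule.span K {u, v} := by
  let B := Module.finBasis K V
  refine ⟨if h0 : 0 < Module.finrank K V then B ⟨0, h0⟩ else 0,
          if h1 : 1 < Module.finrank K V then B ⟨1, h1⟩ else 0, fun q => ?_⟩
  have hsub : Set.range B ⊆
      ({if h0 : 0 < Module.finrank K V then B ⟨0, h0⟩ else 0,
        if h1 : 1 < Module.finrank K V then B ⟨1, h1⟩ else 0} : Set V) := by
    rintro _ ⟨i, rfl⟩
    have hlt := i.isLt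
    have : (i : ℕ) = 0 ∨ (i : ℕ) = 1 := by omega
    rcases this with h1 | h1
    · left
      rw [dif_pos (show 0 < Module.finrank K V by omega)]
      congr 1
      exact Fin.ext h1
    · right
      rw [dif_pos (show 1 < Module.finrank K V by omega)]
      congr 1
      exact Fin.ext h1
  have htop : (⊤ : Submodule K V) ≤ Submodule.span K
      ({if h0 : 0 < Module.finrank K V then B ⟨0, h0⟩ else 0,
        if h1 : 1 < Module.finrank K V then B ⟨1, h1⟩ else 0} : Set V) := by
    rw [← B.span_eq]
    exact Submodule.span_mono hsub
  exact htop trivial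

lemma aux_perfect (R A : Type*) [CommRing R] [LieRing A] [LieAlgebra R A]
    [LieAlgebra.IsSemisimple R A] : LieAlgebra.derivedSeries R A 1 = ⊤ := by
  have h1 : LieAlgebra.derivedSeries R A 1 = ⁅(⊤ : LieIdeal R A), (⊤ : LieIdeal R A)⁆ := by
    rw [LieAlgebra.derivedSeries_def, LieAlgebra.derivedSeriesOfIdeal_succ,
      LieAlgebra.derivedSeriesOfIdeal_zero]
  rw [h1, eq_top_iff]
  have hs : sSup {I : LieIdeal R A | IsAtom I} ≤ ⁅(⊤ : LieIdeal R A), (⊤ : LieIdeal R A)⁆ := by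
    refine sSup_le ?_
    rintro I hI
    calc I = ⁅I, I⁆ :=
          (lie_eq_self_of_isAtom_of_nonabelian I hI
            (LieAlgebra.IsSemisimple.non_abelian_of_isAtom I hI)).symm
      _ ≤ ⁅(⊤ : LieIdeal R A), (⊤ : LieIdeal R A)⁆ := LieSubmodule.mono_lie le_top le_top
  calc (⊤ : LieIdeal R A) = sSup {I : LieIdeal R A | IsAtom I} :=
        (LieAlgebra.IsSemisimple.sSup_atoms_eq_top (R := R) (L := A)).symm
    _ ≤ ⁅(⊤ : LieIdeal R A), (⊤ : LieIdeal R A)⁆ := hs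

/-- Let `L` (= ĝ) be a finite-dimensional Lie algebra over `ℂ` and `g` (= 𝔤)
a real Lie subalgebra (restriction of scalars) with `ĝ = 𝔤 + i•𝔤`.  Let
`m = 𝔪 := {x ∈ 𝔤 : i • x ∈ 𝔤}` (a `ℂ`-linear ideal of `ĝ`).  If
`dim_ℂ ĝ ≤ dim_ℂ 𝔪 + 2`, then every `ℂ`-Lie subalgebra `ŝ` of `ĝ` which is a semisimple Lie
algebra satisfies `ŝ ⊆ 𝔪`; in particular `ŝ ⊆ 𝔤`. -/
theorem stmt3 {L : Type*} [LieRing L] [LieAlgebra ℂ L] [LieAlgebra ℝ L]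
    [IsScalarTower ℝ ℂ L] [FiniteDimensional ℂ L]
    (g : LieSubalgebra ℝ L)
    (hspan : ∀ z : L, ∃ x ∈ g, ∃ y ∈ g, z = x + Complex.I • y)
    (m : Submodule ℂ L)
    (hm : (m : Set L) = {x : L | x ∈ g ∧ Complex.I • x ∈ g})
    (hdim : Module.finrank ℂ L ≤ Module.finrank ℂ m + 2)
    (s : LieSubalgebra ℂ L) [LieAlgebra.IsSemisimple ℂ s] :
    (∀ x ∈ s, x ∈ m) ∧ (∀ x ∈ s, x ∈ g) := by
  have hm' : ∀ x : L, x ∈ m ↔ x ∈ g ∧ Complex.I • x ∈ g := by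
    intro x
    constructor
    · intro hx
      have : x ∈ (m : Set L) := hx
      rw [hm] at this
      exact this
    · intro hx
      show x ∈ (m : Set L)
      rw [hm]
      exact hx
  -- m is a bracket ideal
  have hgm : ∀ x ∈ m, ∀ u ∈ g, ⁅x, u⁆ ∈ m := by
    intro x hx u hu
    obtain ⟨hxg, hxi⟩ := (hm' x).mp hx
    refine (hm' _).mpr ⟨g.lie_mem hxg hu, ?_⟩
    have h : Complex.I • ⁅x, u⁆ = ⁅Complex.I • x, u⁆ := (smul_lie _ _ _).symm
    rw [h]
    exact g.lie_mem hxi hu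
  have hideal : ∀ x ∈ m, ∀ y : L, ⁅x, y⁆ ∈ m := by
    intro x hx y
    obtain ⟨u, hu, w, hw, rfl⟩ := hspan y
    rw [lie_add, lie_smul]
    exact m.add_mem (hgm x hx u hu) (m.smul_mem _ (hgm x hx w hw))
  have hideal' : ∀ x ∈ m, ∀ y : L, ⁅y, x⁆ ∈ m := by
    intro x hx y
    rw [← lie_skew]
    exact m.neg_mem (hideal x hx y)
  -- a spanning pair modulo m
  have hfin : Module.finrank ℂ (L ⧸ m) ≤ 2 := by
    have h := Submodule.finrank_quotient_add_finrank m
    omega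
  obtain ⟨u, v, huv⟩ := aux_span_pair hfin
  obtain ⟨a, ha⟩ := Submodule.Quotient.mk_surjective m u
  obtain ⟨b, hb⟩ := Submodule.Quotient.mk_surjective m v
  set W : Submodule ℂ L := m ⊔ (Submodule.span ℂ {⁅a, b⁆}) with hWdef
  have hab : ∀ z : L, z ∈ m ⊔ Submodule.span ℂ ({a, b} : Set L) := by
    intro z
    obtain ⟨α, β, hq⟩ := Submodule.mem_span_pair.mp (huv (Submodule.Quotient.mk z))
    have h1 : (Submodule.Quotient.mk (α • a + β • b) : L ⧸ m) = α • u + β • v := by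
      simp [Submodule.Quotient.mk_add, Submodule.Quotient.mk_smul, ha, hb]
    have h2 : (Submodule.Quotient.mk z : L ⧸ m) = Submodule.Quotient.mk (α • a + β • b) := by
      rw [h1, hq]
    have hz : z - (α • a + β • b) ∈ m := (Submodule.Quotient.eq m).mp h2
    exact Submodule.mem_sup.mpr ⟨z - (α • a + β • b), hz, α • a + β • b,
      Submodule.mem_span_pair.mpr ⟨α, β, rfl⟩, by abel⟩
  -- every bracket lands in W
  have key1 : ∀ x y : L, ⁅x, y⁆ ∈ W := by
    intro x y
    obtain ⟨mx, hmx, px, hpx, hx⟩ := Submodule.mem_sup.mp (hab x)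
    obtain ⟨my, hmy, py, hpy, hy⟩ := Submodule.mem_sup.mp (hab y)
    obtain ⟨α, β, hp⟩ := Submodule.mem_span_pair.mp hpx
    obtain ⟨γ, δ, hq⟩ := Submodule.mem_span_pair.mp hpy
    subst hp hq hx hy
    have hba : ⁅b, a⁆ = -⁅a, b⁆ := (lie_skew b a).symm
    have h5 : ⁅α • a + β • b, γ • a + δ • b⁆ = (α * δ - β * γ) • ⁅a, b⁆ := by
      simp only [lie_add, add_lie, lie_smul, smul_lie, lie_self, smul_zero, zero_add,
        add_zero, hba, smul_neg]
      module
    have expand : ⁅mx + (α • a + β • b), my + (γ • a + δ • b)⁆ =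
        ⁅mx, my + (γ • a + δ • b)⁆ + ⁅α • a + β • b, my⁆ + (α * δ - β * γ) • ⁅a, b⁆ := by
      simp only [add_lie, lie_add, lie_smul, smul_lie, lie_self, smul_zero, hba, smul_neg]
      module
    rw [expand]
    refine W.add_mem (W.add_mem ?_ ?_) ?_
    · exact (le_sup_left : m ≤ W) (hideal mx hmx _)
    · exact (le_sup_left : m ≤ W) (hideal' my hmy _)
    · exact (le_sup_right : Submodule.span ℂ {⁅a, b⁆} ≤ W)
        (Submodule.smul_mem _ _ (Submodule.mem_span_singleton_self _))
  -- brackets of elements of W land in m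
  have key2 : ∀ x ∈ W, ∀ y ∈ W, ⁅x, y⁆ ∈ m := by
    intro x hx y hy
    obtain ⟨mx, hmx, px, hpx, hx'⟩ := Submodule.mem_sup.mp hx
    obtain ⟨my, hmy, py, hpy, hy'⟩ := Submodule.mem_sup.mp hy
    obtain ⟨γ, hγ⟩ := Submodule.mem_span_singleton.mp hpx
    obtain ⟨δ, hδ⟩ := Submodule.mem_span_singleton.mp hpy
    subst hγ hδ hx' hy'
    have expand : ⁅mx + γ • ⁅a, b⁆, my + δ • ⁅a, b⁆⁆ =
        ⁅mx, my + δ • ⁅a, b⁆⁆ + ⁅γ • ⁅a, b⁆, my⁆ := by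
      simp only [add_lie, lie_add, lie_smul, smul_lie, lie_self, smul_zero]
      module
    rw [expand]
    exact m.add_mem (hideal mx hmx _) (hideal' my hmy _)
  -- derived series facts
  have hbr : ∀ (I J : LieIdeal ℂ L) (P : Submodule ℂ L),
      (∀ x ∈ I, ∀ y ∈ J, ⁅x, y⁆ ∈ P) → ∀ z ∈ (⁅I, J⁆ : LieIdeal ℂ L), z ∈ P := by
    intro I J P hP z hz
    have hz' : z ∈ LieSubmodule.toSubmodule (⁅I, J⁆ : LieIdeal ℂ L) :=
      (LieSubmodule.mem_toSubmodule _).mpr hz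
    rw [LieSubmodule.lieIdeal_oper_eq_linear_span'] at hz'
    refine Submodule.span_le.mpr ?_ hz'
    rintro _ ⟨x, hx, y, hy, rfl⟩
    exact hP x hx y hy
  have hds1 : LieAlgebra.derivedSeries ℂ L 1 = ⁅(⊤ : LieIdeal ℂ L), (⊤ : LieIdeal ℂ L)⁆ := by
    rw [LieAlgebra.derivedSeries_def, LieAlgebra.derivedSeriesOfIdeal_succ,
      LieAlgebra.derivedSeriesOfIdeal_zero]
  have hds2 : LieAlgebra.derivedSeries ℂ L 2 =
      ⁅LieAlgebra.derivedSeries ℂ L 1, LieAlgebra.derivedSeries ℂ L 1⁆ := by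
    rw [LieAlgebra.derivedSeries_def, LieAlgebra.derivedSeriesOfIdeal_succ,
      ← LieAlgebra.derivedSeries_def]
  have hD1 : ∀ z ∈ LieAlgebra.derivedSeries ℂ L 1, z ∈ W := by
    intro z hz
    exact hbr ⊤ ⊤ W (fun x _ y _ => key1 x y) z (hds1 ▸ hz)
  have hD2 : ∀ z ∈ LieAlgebra.derivedSeries ℂ L 2, z ∈ m := by
    intro z hz
    exact hbr _ _ m (fun x hx y hy => key2 x (hD1 x hx) y (hD1 y hy)) z (hds2 ▸ hz)
  -- s is perfect
  have hperf : LieAlgebra.derivedSeries ℂ s 1 = ⊤ := aux_perfect ℂ s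
  have hperf2 : LieAlgebra.derivedSeries ℂ s 2 = ⊤ := LieIdeal.derivedSeries_eq_top 2 hperf
  have hsm : ∀ x ∈ s, x ∈ m := by
    intro x hx
    have h1 : (⟨x, hx⟩ : s) ∈ LieAlgebra.derivedSeries ℂ s 2 := by
      rw [hperf2]
      trivial
    have h2 : s.incl ⟨x, hx⟩ ∈ LieIdeal.map s.incl (LieAlgebra.derivedSeries ℂ s 2) :=
      LieIdeal.mem_map h1
    have h3 : x ∈ LieAlgebra.derivedSeries ℂ L 2 :=
      LieIdeal.derivedSeries_map_le 2 h2
    exact hD2 x h3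
  exact ⟨hsm, fun x hx => ((hm' x).mp (hsm x hx)).1⟩
end

section
/- Let p : G̃ → G be a continuous surjective group homomorphism of topological groups which is a covering map, where G̃ is path-connected and simply connected and G is path-connected. Let H be a subgroup of G which is path-connected in the subspace topology and such that the inclusion H ↪ G induces a surjective homomorphism of fundamental groups π₁(H, 1) → π₁(G, 1). Then every element of the kernel of p lies in the path component of the identity of the subspace p⁻¹(H) ⊆ G̃. -/
open Set Topology unitInterval

section Glue

variable {A B : Type*} [TopologicalSpace A] [TopologicalSpace B]

theorem myGlue {R Q : Set A} [∀ j, Decidable (j ∈ R)] (hR : IsClosed R) (hQ : IsClosed Q) {g₁ g₂ : A → B}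
    (h₁ : ContinuousOn g₁ R) (h₂ : ContinuousOn g₂ Q) (heq : EqOn g₁ g₂ (R ∩ Q)) :
    ContinuousOn (R.piecewise g₁ g₂) (R ∪ Q) := by
  classical
  intro x hx
  rw [continuousWithinAt_union]
  constructor
  · by_cases hxR : x ∈ R
    · exact (h₁ x hxR).congr (fun y hy => Set.piecewise_eq_of_mem _ _ _ hy)
        (Set.piecewise_eq_of_mem _ _ _ hxR)
    · exact continuousWithinAt_of_notMem_closure (by rwa [hR.closure_eq])
  · by_cases hxQ : x ∈ Q
    · refine (h₂ x hxQ).congr (fun y hy => ?_) ?_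
      · by_cases hyR : y ∈ R
        · rw [Set.piecewise_eq_of_mem _ _ _ hyR]; exact heq ⟨hyR, hy⟩
        · rw [Set.piecewise_eq_of_notMem _ _ _ hyR]
      · by_cases hxR : x ∈ R
        · rw [Set.piecewise_eq_of_mem _ _ _ hxR]; exact heq ⟨hxR, hxQ⟩
        · rw [Set.piecewise_eq_of_notMem _ _ _ hxR]
    · exact continuousWithinAt_of_notMem_closure (by rwa [hQ.closure_eq])

end Glue

section Step

variable {E X A : Type*} [TopologicalSpace E] [TopologicalSpace X] [TopologicalSpace A]

/-- One-step extension of a partial lift over an evenly covered set. -/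
theorem lift_step {f : E → X} (hf : IsCoveringMap f) {h : A → X} (hcont : Continuous h)
    {R Q : Set A} (hR : IsClosed R) (hQ : IsClosed Q)
    (hconn : IsPreconnected (R ∩ Q)) (hne : (R ∩ Q).Nonempty)
    {x : X} [Nonempty (f ⁻¹' {x})] (hQU : ∀ q ∈ Q, h q ∈ (hf x).toTrivialization.baseSet)
    {g : A → E} (hg : ContinuousOn g R) (hfg : ∀ q ∈ R, f (g q) = h q) :
    ∃ g' : A → E, ContinuousOn g' (R ∪ Q) ∧ (∀ q ∈ R ∪ Q, f (g' q) = h q) ∧ EqOn g' g R := by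
  classical
  haveI : DiscreteTopology (f ⁻¹' {x}) := (hf x).1
  set T := (hf x).toTrivialization with hT
  obtain ⟨q₀, hq₀⟩ := hne
  have hsrc : ∀ q ∈ R ∩ Q, g q ∈ T.source := fun q hq =>
    T.mem_source.mpr (by rw [hfg q hq.1]; exact hQU q hq.2)
  have hφ : ContinuousOn (fun q => (T (g q)).2) (R ∩ Q) := by
    refine continuous_snd.comp_continuousOn ?_
    exact T.toPartialHomeomorph.continuousOn.comp (hg.mono inter_subset_left) hsrc
  set c : f ⁻¹' {x} := (T (g q₀)).2 with hc0
  have hc : ∀ q ∈ R ∩ Q, (T (g q)).2 = c := by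
    intro q hq
    have hsub := (hconn.image _ hφ).subsingleton
    exact hsub (mem_image_of_mem _ hq) (mem_image_of_mem _ hq₀)
  set g₂ : A → E := fun q => T.toPartialHomeomorph.symm (h q, c) with hg₂
  have hg₂cont : ContinuousOn g₂ Q := by
    refine T.toPartialHomeomorph.continuousOn_symm.comp
      (hcont.continuousOn.prodMk continuousOn_const) ?_
    intro q hq
    rw [T.mem_target]
    exact hQU q hq
  have hfg₂ : ∀ q ∈ Q, f (g₂ q) = h q := fun q hq =>
    T.proj_symm_apply (T.mem_target.mpr (hQU q hq))
  have heq : EqOn g g₂ (R ∩ Q) := by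
    intro q hq
    have h1 : T (g q) = (h q, c) := by
      refine Prod.ext ?_ (hc q hq)
      rw [T.coe_fst (hsrc q hq)]
      exact hfg q hq.1
    calc g q = T.toPartialHomeomorph.symm (T (g q)) :=
          (T.toPartialHomeomorph.left_inv (hsrc q hq)).symm
      _ = g₂ q := by rw [h1]
  refine ⟨R.piecewise g g₂, myGlue hR hQ hg hg₂cont heq, fun q hq => ?_,
    fun q hq => Set.piecewise_eq_of_mem _ _ _ hq⟩
  by_cases hqR : q ∈ R
  · rw [Set.piecewise_eq_of_mem _ _ _ hqR]; exact hfg q hqR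
  · rw [Set.piecewise_eq_of_notMem _ _ _ hqR]; exact hfg₂ q (hq.resolve_left hqR)

end Step


open Set Topology

namespace CoveringLiftAux

/-- The small square of a grid. -/
def sq (n i j : ℕ) : Set (ℝ × ℝ) :=
  Icc ((i : ℝ) / n) (((i : ℝ) + 1) / n) ×ˢ Icc ((j : ℝ) / n) (((j : ℝ) + 1) / n)

/-- Bottom part of the staircase region. -/
def stA (n j : ℕ) : Set (ℝ × ℝ) :=
  if j = 0 then {((0 : ℝ), (0 : ℝ))} else Icc (0 : ℝ) 1 ×ˢ Icc (0 : ℝ) ((j : ℝ) / n)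

/-- Partial-row part of the staircase region. -/
def stB (n i j : ℕ) : Set (ℝ × ℝ) :=
  if i = 0 then ∅ else Icc (0 : ℝ) ((i : ℝ) / n) ×ˢ Icc ((j : ℝ) / n) (((j : ℝ) + 1) / n)

/-- Staircase region. -/
def st (n i j : ℕ) : Set (ℝ × ℝ) := stA n j ∪ stB n i j

variable {n i j : ℕ}

theorem isClosed_sq : IsClosed (sq n i j) := isClosed_Icc.prod isClosed_Icc

theorem isClosed_st : IsClosed (st n i j) := by
  apply IsClosed.union
  · unfold stA; split
    · exact isClosed_singleton
    · exact isClosed_Icc.prod isClosed_Icc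
  · unfold stB; split
    · exact isClosed_empty
    · exact isClosed_Icc.prod isClosed_Icc

theorem zero_mem_st : ((0 : ℝ), (0 : ℝ)) ∈ st n i j := by
  left
  unfold stA; split
  · exact rfl
  · exact ⟨⟨le_refl _, zero_le_one⟩, ⟨le_refl _, by positivity⟩⟩

section WithN

variable (hn : 0 < n)
include hn

theorem hnR : (0 : ℝ) < n := by exact_mod_cast hn

theorem div_nonnegR : (0 : ℝ) ≤ (i : ℝ) / n := by positivity

theorem div_monoR : ((i : ℝ)) / n ≤ ((i : ℝ) + 1) / n := by
  have := hnR hn; gcongr; linarith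

theorem div_le_oneR (hi : i < n) : ((i : ℝ) + 1) / n ≤ 1 := by
  rw [div_le_one (hnR hn)]
  exact_mod_cast Nat.succ_le_of_lt hi

theorem stA_inter (hi : i < n) :
    stA n j ∩ sq n i j =
      if j = 0 then (if i = 0 then {((0 : ℝ), (0 : ℝ))} else (∅ : Set (ℝ × ℝ)))
      else Icc ((i : ℝ) / n) (((i : ℝ) + 1) / n) ×ˢ {(j : ℝ) / n} := by
  unfold stA sq
  by_cases hj : j = 0
  · subst hj
    rw [if_pos rfl, if_pos rfl]
    by_cases hi0 : i = 0
    · subst hi0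
      rw [if_pos rfl, Set.inter_eq_left.mpr]
      intro q hq
      rw [Set.mem_singleton_iff] at hq
      subst hq
      push_cast
      constructor <;> constructor <;> simp <;> positivity
    · rw [if_neg hi0, Set.singleton_inter_eq_empty.mpr]
      intro hmem
      have h1 : (0 : ℝ) ∈ Icc ((i : ℝ) / n) (((i : ℝ) + 1) / n) := hmem.1
      have h2 : (0 : ℝ) < (i : ℝ) / n := by
        apply div_pos ?_ (hnR hn)
        exact_mod_cast Nat.pos_of_ne_zero hi0
      exact absurd h1.1 (by linarith)
  · rw [if_neg hj, if_neg hj, Set.prod_inter_prod, Set.Icc_inter_Icc,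
      Set.Icc_inter_Icc_eq_singleton (div_nonnegR hn) (div_monoR hn)]
    congr 1
    rw [max_eq_right (div_nonnegR hn), min_eq_right (div_le_oneR hn hi)]

theorem stB_inter :
    stB n i j ∩ sq n i j =
      if i = 0 then ∅ else {(i : ℝ) / n} ×ˢ Icc ((j : ℝ) / n) (((j : ℝ) + 1) / n) := by
  unfold stB sq
  by_cases hi0 : i = 0
  · rw [if_pos hi0, if_pos hi0, Set.empty_inter]
  · rw [if_neg hi0, if_neg hi0, Set.prod_inter_prod,
      Set.Icc_inter_Icc_eq_singleton (div_nonnegR hn) (div_monoR hn), Set.inter_self]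

theorem st_inter_nonempty : (st n i j ∩ sq n i j).Nonempty := by
  refine ⟨((i : ℝ) / n, (j : ℝ) / n), ?_, ⟨le_refl _, div_monoR hn⟩, le_refl _, div_monoR hn⟩
  by_cases hi0 : i = 0
  · left
    unfold stA
    subst hi0
    split
    · next hj0 =>
        subst hj0
        simp
    · push_cast
      exact ⟨⟨by positivity, by rw [div_le_one (hnR hn)]; simp⟩,
        by positivity, le_refl _⟩
  · right
    unfold stB
    rw [if_neg hi0]
    exact ⟨⟨div_nonnegR hn, le_refl _⟩, le_refl _, div_monoR hn⟩

theorem st_inter_preconnected (hi : i < n) : IsPreconnected (st n i j ∩ sq n i j) := by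
  rw [st, Set.union_inter_distrib_right, stA_inter hn hi, stB_inter hn]
  by_cases hj : j = 0
  · rw [if_pos hj]
    by_cases hi0 : i = 0
    · rw [if_pos hi0, if_pos hi0, Set.union_empty]
      exact isPreconnected_singleton
    · rw [if_neg hi0, if_neg hi0, Set.empty_union]
      exact isPreconnected_singleton.prod isPreconnected_Icc
  · rw [if_neg hj]
    by_cases hi0 : i = 0
    · rw [if_pos hi0, Set.union_empty]
      exact (isPreconnected_Icc).prod isPreconnected_singleton
    · rw [if_neg hi0]
      apply IsPreconnected.union ((i : ℝ) / n, (j : ℝ) / n)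
      · exact ⟨⟨le_refl _, div_monoR hn⟩, rfl⟩
      · exact ⟨rfl, le_refl _, div_monoR hn⟩
      · exact (isPreconnected_Icc).prod isPreconnected_singleton
      · exact isPreconnected_singleton.prod isPreconnected_Icc

theorem st_succ_subset (hi : i + 1 < n) : st n (i + 1) j ⊆ st n i j ∪ sq n i j := by
  rintro ⟨a, b⟩ hab
  rcases hab with hab | hab
  · exact Or.inl (Or.inl hab)
  · rw [stB, if_neg (Nat.succ_ne_zero i)] at hab
    obtain ⟨⟨ha0, ha1⟩, hb⟩ := hab
    push_cast at ha1
    rcases le_total a ((i : ℝ) / n) with hai | hai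
    · by_cases hi0 : i = 0
      · subst hi0
        refine Or.inr ⟨⟨?_, ?_⟩, hb⟩
        · push_cast; simpa using ha0
        · push_cast; simpa using ha1
      · exact Or.inl (Or.inr (by rw [stB, if_neg hi0]; exact ⟨⟨ha0, hai⟩, hb⟩))
    · exact Or.inr ⟨⟨hai, ha1⟩, hb⟩

theorem st_row_subset (hi : i + 1 = n) : st n 0 (j + 1) ⊆ st n i j ∪ sq n i j := by
  have htop : ((i : ℝ) + 1) / n = 1 := by
    rw [div_eq_one_iff_eq (hnR hn).ne']
    exact_mod_cast hi
  rintro ⟨a, b⟩ hab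
  rcases hab with hab | hab
  swap
  · rw [stB, if_pos rfl] at hab; exact absurd hab (Set.notMem_empty _)
  rw [stA, if_neg (Nat.succ_ne_zero j)] at hab
  obtain ⟨⟨ha0, ha1⟩, hb0, hb1⟩ := hab
  push_cast at hb1
  have hupper : (j : ℝ) / n ≤ b → ((a, b) : ℝ × ℝ) ∈ st n i j ∪ sq n i j := by
    intro hbj
    rcases le_total a ((i : ℝ) / n) with hai | hai
    · by_cases hi0 : i = 0
      · refine Or.inr ⟨⟨?_, ?_⟩, hbj, hb1⟩
        · subst hi0; push_cast; simpa using ha0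
        · rw [htop]; exact ha1
      · exact Or.inl (Or.inr (by rw [stB, if_neg hi0]; exact ⟨⟨ha0, hai⟩, hbj, hb1⟩))
    · exact Or.inr ⟨⟨hai, by rw [htop]; exact ha1⟩, hbj, hb1⟩
  rcases le_total b ((j : ℝ) / n) with hbj | hbj
  · by_cases hj0 : j = 0
    · apply hupper
      subst hj0; push_cast; simpa using hb0
    · exact Or.inl (Or.inl (by rw [stA, if_neg hj0]; exact ⟨⟨ha0, ha1⟩, hb0, hbj⟩))
  · exact hupper hbj

omit hn in
theorem st_zero : st n 0 0 = {((0 : ℝ), (0 : ℝ))} := by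
  rw [st, stA, if_pos rfl, stB, if_pos rfl, Set.union_empty]

theorem square_subset_st_final : Icc (0 : ℝ) 1 ×ˢ Icc (0 : ℝ) 1 ⊆ st n 0 n := by
  intro q hq
  left
  rw [stA, if_neg hn.ne', div_self (hnR hn).ne']
  exact hq

end WithN

end CoveringLiftAux

section SquareLift

open CoveringLiftAux

/-- Lifting of continuous maps on the unit square along a covering map. -/
theorem square_lift {E X : Type*} [TopologicalSpace E] [TopologicalSpace X]
    {f : E → X} (hf : IsCoveringMap f) (hfs : Function.Surjective f) {h : ℝ × ℝ → X} (hcont : Continuous h)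
    {e₀ : E} (he₀ : f e₀ = h (0, 0)) :
    ∃ g : ℝ × ℝ → E, ContinuousOn g (Icc (0:ℝ) 1 ×ˢ Icc (0:ℝ) 1) ∧
      (∀ q ∈ Icc (0:ℝ) 1 ×ˢ Icc (0:ℝ) 1, f (g q) = h q) ∧ g (0, 0) = e₀ := by
  haveI : ∀ x : X, Nonempty (f ⁻¹' {x}) := fun x => let ⟨e, he⟩ := hfs x; ⟨⟨e, he⟩⟩
  have hK : IsCompact (Icc (0:ℝ) 1 ×ˢ Icc (0:ℝ) 1) := isCompact_Icc.prod isCompact_Icc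
  have hopen : ∀ x : X, IsOpen (h ⁻¹' (hf x).toTrivialization.baseSet) :=
    fun x => (hf x).toTrivialization.open_baseSet.preimage hcont
  have hcover : Icc (0:ℝ) 1 ×ˢ Icc (0:ℝ) 1 ⊆ ⋃ x : X, h ⁻¹' (hf x).toTrivialization.baseSet :=
    fun q _ => mem_iUnion.mpr ⟨h q, (hf (h q)).mem_toTrivialization_baseSet⟩
  obtain ⟨δ, hδ, hball⟩ := lebesgue_number_lemma_of_metric hK hopen hcover
  obtain ⟨m, hm⟩ := exists_nat_one_div_lt hδ
  set n := m + 1 with hndef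
  have hn : 0 < n := Nat.succ_pos m
  have hnR' : (0:ℝ) < n := hnR hn
  have hm' : 1 / (n : ℝ) < δ := by
    rw [hndef]; push_cast; exact hm
  have hcov : ∀ i j : ℕ, i < n → j < n → ∃ x : X, ∀ q ∈ sq n i j,
      h q ∈ (hf x).toTrivialization.baseSet := by
    intro i j hi hj
    have hcorner : (((i:ℝ)/n, (j:ℝ)/n) : ℝ × ℝ) ∈ Icc (0:ℝ) 1 ×ˢ Icc (0:ℝ) 1 := by
      constructor
      · exact ⟨by positivity, by rw [div_le_one hnR']; exact_mod_cast hi.le⟩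
      · exact ⟨by positivity, by rw [div_le_one hnR']; exact_mod_cast hj.le⟩
    obtain ⟨x, hx⟩ := hball _ hcorner
    refine ⟨x, fun q hq => hx ?_⟩
    obtain ⟨⟨h1, h2⟩, h3, h4⟩ := hq
    have hkey : ((i:ℝ)+1)/n - (i:ℝ)/n = 1/n := by ring
    have hkey' : ((j:ℝ)+1)/n - (j:ℝ)/n = 1/n := by ring
    rw [Metric.mem_ball, Prod.dist_eq, Real.dist_eq, Real.dist_eq]
    apply max_lt <;> rw [abs_lt] <;> constructor <;> linarith
  have key : ∀ k : ℕ, k ≤ n * n → ∃ g : ℝ × ℝ → E,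
      ContinuousOn g (st n (k % n) (k / n)) ∧
      (∀ q ∈ st n (k % n) (k / n), f (g q) = h q) ∧ g (0, 0) = e₀ := by
    intro k
    induction k with
    | zero =>
      intro _
      rw [Nat.zero_mod, Nat.zero_div, st_zero]
      exact ⟨fun _ => e₀, continuousOn_const,
        fun q hq => by rw [Set.mem_singleton_iff] at hq; rw [hq]; exact he₀, rfl⟩
    | succ k ih =>
      intro hk1
      obtain ⟨g, hgc, hgp, hg0⟩ := ih (Nat.le_of_succ_le hk1)
      set i := k % n with hidef
      set j := k / n with hjdef
      have hi : i < n := Nat.mod_lt _ hn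
      have hj : j < n := (Nat.div_lt_iff_lt_mul hn).mpr (Nat.lt_of_succ_le hk1)
      obtain ⟨x, hx⟩ := hcov i j hi hj
      obtain ⟨g', hg'c, hg'p, hg'eq⟩ := lift_step hf hcont isClosed_st isClosed_sq
        (st_inter_preconnected hn hi) (st_inter_nonempty hn) hx hgc hgp
      have hk : n * j + i = k := Nat.div_add_mod k n
      have hnext : st n ((k+1) % n) ((k+1) / n) ⊆ st n i j ∪ sq n i j := by
        by_cases hi1 : i + 1 < n
        · have hsplit : k + 1 = n * j + (i + 1) := by omega
          have e1 : (k+1) % n = i + 1 := by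
            rw [hsplit, Nat.mul_add_mod, Nat.mod_eq_of_lt hi1]
          have e2 : (k+1) / n = j := by
            rw [hsplit, Nat.mul_add_div hn, Nat.div_eq_of_lt hi1, Nat.add_zero]
          rw [e1, e2]; exact st_succ_subset hn hi1
        · have hi1' : i + 1 = n := by omega
          have e0 : k + 1 = n * (j + 1) := by rw [Nat.mul_succ]; omega
          have e1 : (k+1) % n = 0 := by rw [e0]; exact Nat.mul_mod_right _ _
          have e2 : (k+1) / n = j + 1 := by rw [e0]; exact Nat.mul_div_cancel_left _ hn
          rw [e1, e2]; exact st_row_subset hn hi1'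
      exact ⟨g', hg'c.mono hnext, fun q hq => hg'p q (hnext hq),
        by rw [hg'eq zero_mem_st, hg0]⟩
  obtain ⟨g, hgc, hgp, hg0⟩ := key (n * n) le_rfl
  have e1 : (n * n) % n = 0 := Nat.mul_mod_right _ _
  have e2 : (n * n) / n = n := Nat.mul_div_cancel_left _ hn
  rw [e1, e2] at hgc hgp
  exact ⟨g, hgc.mono (square_subset_st_final hn),
    fun q hq => hgp q (square_subset_st_final hn hq), hg0⟩

end SquareLift

/-- The map on fundamental groups `π₁(X, x) → π₁(Y, f x)` induced by a continuous map
`f : X → Y` is surjective: every loop at `f x` is path-homotopic to the image under `f`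
of a loop at `x`. -/
def InducedPi1Surjective {X Y : Type*} [TopologicalSpace X] [TopologicalSpace Y]
    (f : X → Y) (hf : Continuous f) (x : X) : Prop :=
  ∀ γ : Path (f x) (f x), ∃ δ : Path x x, (δ.map hf).Homotopic γ

/-- Let `p : G̃ → G` be a continuous surjective homomorphism of topological
groups which is a covering map, `G̃` path connected and simply connected, `G` path connected.
Let `H ≤ G` be a path-connected subgroup such that the inclusion `H ↪ G` induces a surjection
`π₁(H,1) → π₁(G,1)`.  Then every element of `ker p` lies in the path component of the
identity of the subspace `p⁻¹(H) ⊆ G̃`. -/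
theorem stmt4 {Gt G : Type*} [TopologicalSpace Gt] [Group Gt] [IsTopologicalGroup Gt]
    [TopologicalSpace G] [Group G] [IsTopologicalGroup G]
    [PathConnectedSpace Gt] [SimplyConnectedSpace Gt] [PathConnectedSpace G]
    (p : Gt →* G) (hpcont : Continuous p) (hpsurj : Function.Surjective p)
    (hpcov : IsCoveringMap (⇑p))
    (H : Subgroup G) (hHpc : IsPathConnected (H : Set G))
    (hsurj : InducedPi1Surjective (Subtype.val : H → G) continuous_subtype_val (1 : H)) :
    ∀ n ∈ p.ker, JoinedIn ((⇑p) ⁻¹' (H : Set G)) 1 n := by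
  intro n hn
  have hpn : p n = 1 := hn
  have hp1 : p (1 : Gt) = 1 := map_one p
  have h1H : ((1 : H) : G) = 1 := rfl
  set δ : Path (1 : Gt) n := PathConnectedSpace.somePath 1 n with hδdef
  set γ : Path ((1:H):G) ((1:H):G) :=
    (δ.map hpcont).cast (by rw [h1H, hp1]) (by rw [h1H, hpn]) with hγdef
  obtain ⟨η, hom⟩ := hsurj γ
  obtain ⟨F⟩ := hom
  set pr : ℝ → unitInterval := fun r => Set.projIcc 0 1 zero_le_one r with hprdef
  have prcont : Continuous pr := continuous_projIcc
  have hpr : ∀ t : unitInterval, pr (t : ℝ) = t := fun t => Set.projIcc_val zero_le_one t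
  have hpr0 : pr 0 = 0 := by rw [show ((0:ℝ)) = ((0 : unitInterval) : ℝ) from rfl, hpr]
  have hpr1 : pr 1 = 1 := by rw [show ((1:ℝ)) = ((1 : unitInterval) : ℝ) from rfl, hpr]
  set h : ℝ × ℝ → G := fun q => F (pr q.1, pr q.2) with hhdef
  have hcont : Continuous h :=
    F.continuous.comp ((prcont.comp continuous_fst).prodMk (prcont.comp continuous_snd))
  have h00 : h (0, 0) = 1 := by
    show F (pr 0, pr 0) = 1
    rw [hpr0, Path.Homotopy.source]
    exact h1H
  have he₀ : p (1 : Gt) = h (0, 0) := by rw [hp1, h00]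
  obtain ⟨g, hgc, hgp, hg0⟩ := square_lift hpcov hpsurj hcont he₀
  -- membership of edge points in the square
  have hmem1 : ∀ t : unitInterval, (((1:ℝ), (t:ℝ)) : ℝ × ℝ) ∈ Icc (0:ℝ) 1 ×ˢ Icc (0:ℝ) 1 :=
    fun t => ⟨⟨zero_le_one, le_refl _⟩, t.2⟩
  have hmem0 : ∀ t : unitInterval, (((0:ℝ), (t:ℝ)) : ℝ × ℝ) ∈ Icc (0:ℝ) 1 ×ˢ Icc (0:ℝ) 1 :=
    fun t => ⟨⟨le_refl _, zero_le_one⟩, t.2⟩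
  have hmemb : ∀ s : unitInterval, (((s:ℝ), (0:ℝ)) : ℝ × ℝ) ∈ Icc (0:ℝ) 1 ×ˢ Icc (0:ℝ) 1 :=
    fun s => ⟨s.2, ⟨le_refl _, zero_le_one⟩⟩
  have hmemt : ∀ s : unitInterval, (((s:ℝ), (1:ℝ)) : ℝ × ℝ) ∈ Icc (0:ℝ) 1 ×ˢ Icc (0:ℝ) 1 :=
    fun s => ⟨s.2, ⟨zero_le_one, le_refl _⟩⟩
  -- bottom edge is constant 1
  have hbotc : Continuous (fun s : unitInterval => g ((s:ℝ), 0)) :=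
    hgc.comp_continuous (continuous_subtype_val.prodMk continuous_const) hmemb
  have hbotp : ∀ s : unitInterval, p (g ((s:ℝ), 0)) = 1 := by
    intro s
    rw [hgp _ (hmemb s)]
    show F (pr s, pr 0) = 1
    rw [hpr s, hpr0, Path.Homotopy.source]
    exact h1H
  have hbot : ∀ s : unitInterval, g ((s:ℝ), 0) = 1 := by
    intro s
    have := hpcov.const_of_comp hbotc (fun a a' => by rw [hbotp a, hbotp a']) s 0
    rw [this]
    show g (((0 : unitInterval) : ℝ), (0:ℝ)) = 1
    rw [show (((0 : unitInterval)) : ℝ) = (0:ℝ) from rfl]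
    exact hg0
  -- right edge is the lift of γ, hence equals δ
  have hrightc : Continuous (fun t : unitInterval => g (1, (t:ℝ))) :=
    hgc.comp_continuous (continuous_const.prodMk continuous_subtype_val) hmem1
  have hrightp : ∀ t : unitInterval, p (g (1, (t:ℝ))) = p (δ t) := by
    intro t
    rw [hgp _ (hmem1 t)]
    show F (pr 1, pr t) = p (δ t)
    rw [hpr1, hpr t, ContinuousMap.HomotopyWith.apply_one]
    show γ t = p (δ t)
    rw [hγdef]
    show ((δ.map hpcont).cast _ _ : unitInterval → G) t = p (δ t)
    rw [Path.cast_coe]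
    simp [Path.map_coe]
  have hright : (fun t : unitInterval => g (1, (t:ℝ))) = fun t => δ t := by
    apply hpcov.eq_of_comp_eq hrightc δ.continuous
      (funext fun t => hrightp t) 0
    show g (1, ((0 : unitInterval) : ℝ)) = δ 0
    rw [show (((0 : unitInterval)) : ℝ) = (0:ℝ) from rfl, δ.source]
    exact hbot 1
  have hg11 : g (1, 1) = n := by
    have := congrFun hright 1
    simpa [δ.target] using this
  -- top edge is constant, hence g (0,1) = n
  have htopc : Continuous (fun s : unitInterval => g ((s:ℝ), 1)) :=
    hgc.comp_continuous (continuous_subtype_val.prodMk continuous_const) hmemt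
  have htopp : ∀ s : unitInterval, p (g ((s:ℝ), 1)) = 1 := by
    intro s
    rw [hgp _ (hmemt s)]
    show F (pr s, pr 1) = 1
    rw [hpr s, hpr1, Path.Homotopy.target]
    exact h1H
  have hg01 : g (0, 1) = n := by
    have := hpcov.const_of_comp htopc (fun a a' => by rw [htopp a, htopp a']) 0 1
    rw [show (((0 : unitInterval)) : ℝ) = (0:ℝ) from rfl,
      show (((1 : unitInterval)) : ℝ) = (1:ℝ) from rfl] at this
    rw [this, hg11]
  -- left edge is a path from 1 to n inside p ⁻¹' H
  have hleftc : Continuous (fun t : unitInterval => g (0, (t:ℝ))) :=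
    hgc.comp_continuous (continuous_const.prodMk continuous_subtype_val) hmem0
  have hleftp : ∀ t : unitInterval, p (g (0, (t:ℝ))) = (η t : G) := by
    intro t
    rw [hgp _ (hmem0 t)]
    show F (pr 0, pr t) = (η t : G)
    rw [hpr0, hpr t, ContinuousMap.HomotopyWith.apply_zero]
    rfl
  refine ⟨⟨⟨fun t => g (0, (t:ℝ)), hleftc⟩, ?_, ?_⟩, fun t => ?_⟩
  · show g (0, ((0 : unitInterval) : ℝ)) = 1
    rw [show (((0 : unitInterval)) : ℝ) = (0:ℝ) from rfl]
    exact hg0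
  · show g (0, ((1 : unitInterval) : ℝ)) = n
    rw [show (((1 : unitInterval)) : ℝ) = (1:ℝ) from rfl]
    exact hg01
  · show p (g (0, (t:ℝ))) ∈ (H : Set G)
    rw [hleftp t]
    exact (η t).2
end

section
/- Let p : G̃ → G be a continuous surjective group homomorphism of topological groups which is a covering map, where G̃ is path-connected and simply connected and G is path-connected. Let H be a subgroup of G which is path-connected in the subspace topology and such that the inclusion H ↪ G induces a surjective homomorphism π₁(H, 1) → π₁(G, 1), and let H̃ denote the path component of the identity in p⁻¹(H). Suppose G̃ acts continuously on a topological space F and every element of ker(p) ∩ H̃ acts as the identity on F. Then every element of ker(p) acts as the identity on F, and consequently there is a (unique) continuous action of G on F satisfying g̃ · x = p(g̃) · x for all g̃ ∈ G̃ and x ∈ F. -/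
namespace IsCoveringMap

variable {E X : Type*} [TopologicalSpace E] [TopologicalSpace X] {p : E → X}

theorem exists_path_lifts_of_homotopic (cov : IsCoveringMap p) {e e' : E} (Γ : Path e e')
    {x y : X} (hx : p e = x) (hy : p e' = y) {γ : Path x y}
    (h : γ.Homotopic ((Γ.map cov.continuous).cast hx.symm hy.symm)) :
    ∃ Δ : Path e e', ∀ t, p (Δ t) = γ t := by
  have hγ0 : γ.toContinuousMap 0 = p e := γ.source.trans hx.symm
  have hΓ : cov.liftPath (Γ.map cov.continuous).toContinuousMap e (Γ.map cov.continuous).source =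
      Γ.toContinuousMap :=
    ((cov.eq_liftPath_iff' _).mpr ⟨rfl, Γ.source⟩).symm
  refine ⟨⟨cov.liftPath γ.toContinuousMap e hγ0, cov.liftPath_zero .., ?_⟩,
    fun t => congr_fun (cov.liftPath_lifts _ _ hγ0) t⟩
  calc cov.liftPath γ.toContinuousMap e hγ0 1
      = cov.liftPath (Γ.map cov.continuous).toContinuousMap e (Γ.map cov.continuous).source 1 :=
        cov.liftPath_apply_one_eq_of_homotopicRel h e hγ0 _
    _ = e' := by rw [hΓ]; exact Γ.target

theorem joinedIn_preimage_of_inducedPi1Surjective (cov : IsCoveringMap p) [PathConnectedSpace E]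
    {s : Set X} {x : s} (hs : InducedPi1Surjective (Subtype.val : s → X) continuous_subtype_val x)
    {e e' : E} (he : p e = x) (he' : p e' = x) : JoinedIn (p ⁻¹' s) e e' := by
  let α := PathConnectedSpace.somePath e e'
  obtain ⟨δ, hδ⟩ := hs ((α.map cov.continuous).cast he.symm he'.symm)
  obtain ⟨Δ, hΔ⟩ := cov.exists_path_lifts_of_homotopic α he he' hδ
  exact ⟨Δ, fun t => by simp [hΔ t]⟩

end IsCoveringMap

namespace MonoidHom

variable {Gt G F : Type*} [Group Gt] [Group G] [MulAction Gt F] (p : Gt →* G)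

theorem smul_eq_smul_of_map_eq (hker : ∀ n ∈ p.ker, ∀ x : F, n • x = x) {a b : Gt}
    (hab : p a = p b) (x : F) : a • x = b • x := by
  have hba : b⁻¹ * a ∈ p.ker := by rw [mem_ker, map_mul, map_inv, hab, inv_mul_cancel]
  calc a • x = b • (b⁻¹ * a) • x := by rw [smul_smul, mul_inv_cancel_left]
    _ = b • x := by rw [hker _ hba]

/-- Independent of the chosen preimage `surjInv hp g` only when `ker p` acts trivially. -/
noncomputable def descendedSMul (hp : Function.Surjective p) (g : G) (x : F) : F :=
  Function.surjInv hp g • x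

variable {p}

theorem descendedSMul_map (hp : Function.Surjective p) (hker : ∀ n ∈ p.ker, ∀ x : F, n • x = x)
    (a : Gt) (x : F) : p.descendedSMul hp (p a) x = a • x :=
  p.smul_eq_smul_of_map_eq hker (Function.surjInv_eq hp _) x

theorem continuous_descendedSMul [TopologicalSpace Gt] [TopologicalSpace G] [TopologicalSpace F]
    [ContinuousSMul Gt F] (hp : Function.Surjective p) (hker : ∀ n ∈ p.ker, ∀ x : F, n • x = x)
    (hcont : Continuous p) (hopen : IsOpenMap p) :
    Continuous (fun gx : G × F => p.descendedSMul hp gx.1 gx.2) := by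
  have hq : Topology.IsQuotientMap (Prod.map p (_root_.id : F → F)) :=
    (hopen.prodMap IsOpenMap.id).isQuotientMap (hcont.prodMap continuous_id)
      (hp.prodMap Function.surjective_id)
  rw [hq.continuous_iff]
  convert (continuous_smul : Continuous fun ax : Gt × F => ax.1 • ax.2) using 1
  funext ax
  exact descendedSMul_map hp hker ax.1 ax.2

theorem existsUnique_continuous_action_of_ker_acts_trivially [TopologicalSpace Gt]
    [TopologicalSpace G] [TopologicalSpace F] [ContinuousSMul Gt F] (hp : Function.Surjective p)
    (hcont : Continuous p) (hopen : IsOpenMap p) (hker : ∀ n ∈ p.ker, ∀ x : F, n • x = x) :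
    ∃! act : G → F → F,
      Continuous (fun gx : G × F => act gx.1 gx.2) ∧
      (∀ x : F, act 1 x = x) ∧
      (∀ g g' : G, ∀ x : F, act (g * g') x = act g (act g' x)) ∧
      (∀ gt : Gt, ∀ x : F, act (p gt) x = gt • x) := by
  have hmap := descendedSMul_map hp hker
  refine ⟨p.descendedSMul hp, ⟨continuous_descendedSMul hp hker hcont hopen, fun x => ?_,
    fun g g' x => ?_, hmap⟩, ?_⟩
  · rw [← map_one p, hmap, one_smul]
  · obtain ⟨a, rfl⟩ := hp g
    obtain ⟨b, rfl⟩ := hp g'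
    rw [← map_mul, hmap, hmap, hmap, mul_smul]
  · rintro act ⟨-, -, -, hact⟩
    funext g x
    obtain ⟨a, rfl⟩ := hp g
    rw [hact, hmap]

end MonoidHom

theorem stmt5_general {Gt G F : Type*} [TopologicalSpace Gt] [Group Gt]
    [TopologicalSpace G] [Group G]
    [PathConnectedSpace Gt]
    (p : Gt →* G) (hpsurj : Function.Surjective p)
    (hpcov : IsCoveringMap (⇑p))
    (H : Subgroup G)
    (hsurj : InducedPi1Surjective (Subtype.val : H → G) continuous_subtype_val (1 : H))
    [TopologicalSpace F] [MulAction Gt F] [ContinuousSMul Gt F]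
    (htriv : ∀ n : Gt, n ∈ p.ker → JoinedIn ((⇑p) ⁻¹' (H : Set G)) 1 n →
      ∀ x : F, n • x = x) :
    (∀ n ∈ p.ker, ∀ x : F, n • x = x) ∧
    (∃! act : G → F → F,
      Continuous (fun gx : G × F => act gx.1 gx.2) ∧
      (∀ x : F, act 1 x = x) ∧
      (∀ g g' : G, ∀ x : F, act (g * g') x = act g (act g' x)) ∧
      (∀ gt : Gt, ∀ x : F, act (p gt) x = gt • x)) := by
  have hker : ∀ n ∈ p.ker, ∀ x : F, n • x = x := fun n hn =>
    htriv n hn (hpcov.joinedIn_preimage_of_inducedPi1Surjective hsurj (map_one p) hn)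
  exact ⟨hker, MonoidHom.existsUnique_continuous_action_of_ker_acts_trivially hpsurj
    hpcov.continuous hpcov.isOpenMap hker⟩

/-- Let `p : G̃ → G` be a continuous surjective homomorphism of topological
groups which is a covering map, `G̃` path connected and simply connected, `G` path connected.
Let `H ≤ G` be a path-connected subgroup whose inclusion induces a surjection
`π₁(H,1) → π₁(G,1)`, and let `H̃` be the path component of the identity in `p⁻¹(H)`
(membership in `H̃` is expressed by `JoinedIn (p⁻¹(H)) 1 ·`).  Suppose `G̃` acts continuously
on a space `F` and every element of `ker p ∩ H̃` acts as the identity on `F`.  Then every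
element of `ker p` acts as the identity on `F`, and there is a unique continuous action of
`G` on `F` with `g̃ • x = p(g̃) • x`. -/
theorem stmt5 {Gt G F : Type*} [TopologicalSpace Gt] [Group Gt] [IsTopologicalGroup Gt]
    [TopologicalSpace G] [Group G] [IsTopologicalGroup G]
    [PathConnectedSpace Gt] [SimplyConnectedSpace Gt] [PathConnectedSpace G]
    (p : Gt →* G) (hpcont : Continuous p) (hpsurj : Function.Surjective p)
    (hpcov : IsCoveringMap (⇑p))
    (H : Subgroup G) (hHpc : IsPathConnected (H : Set G))
    (hsurj : InducedPi1Surjective (Subtype.val : H → G) continuous_subtype_val (1 : H))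
    [TopologicalSpace F] [MulAction Gt F] [ContinuousSMul Gt F]
    (htriv : ∀ n : Gt, n ∈ p.ker → JoinedIn ((⇑p) ⁻¹' (H : Set G)) 1 n →
      ∀ x : F, n • x = x) :
    (∀ n ∈ p.ker, ∀ x : F, n • x = x) ∧
    (∃! act : G → F → F,
      Continuous (fun gx : G × F => act gx.1 gx.2) ∧
      (∀ x : F, act 1 x = x) ∧
      (∀ g g' : G, ∀ x : F, act (g * g') x = act g (act g' x)) ∧
      (∀ gt : Gt, ∀ x : F, act (p gt) x = gt • x)) :=
  stmt5_general p hpsurj hpcov H hsurj htriv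
end

section
/- Let p, q ≥ 1, m = p + q, and N = 2m. Let H = diag(I_{2p}, −I_{2q}) be the diagonal N×N complex matrix with 2p entries +1 followed by 2q entries −1, and let Ω be the block-diagonal N×N complex matrix diag(J_{2p}, −J_{2q}), where J_{2k} denotes the standard 2k×2k symplectic matrix [[0, I_k], [−I_k, 0]]. Let G = {A ∈ GL_N(ℂ) : Aᴴ H A = H and Aᵀ Ω A = Ω} (a realization of the real form Sp(2p,2q)). Then G acts transitively on the set of isotropic points {[v] ∈ ℙ(ℂ^N) : q_{2p,2q}(v) = 0}. -/
open scoped Matrix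

/-- The standard `2k×2k` symplectic matrix `J_{2k} = [[0, I_k], [−I_k, 0]]`, with indices
written as `Fin k ⊕ Fin k`. -/
def sympJ (k : ℕ) : Matrix (Fin k ⊕ Fin k) (Fin k ⊕ Fin k) ℂ :=
  Matrix.fromBlocks 0 1 (-1) 0

open Matrix

set_option linter.unusedSectionVars false

namespace Stmt8Aux

variable {p q : ℕ}

abbrev Ix (p q : ℕ) := (Fin p ⊕ Fin p) ⊕ (Fin q ⊕ Fin q)
abbrev Vc (p q : ℕ) := Ix p q → ℂ
abbrev Mx (p q : ℕ) := Matrix (Ix p q) (Ix p q) ℂ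

def Hm : Mx p q := fromBlocks 1 0 0 (-1)
def Om : Mx p q := fromBlocks (sympJ p) 0 0 (-(sympJ q))
def Jf : Mx p q := fromBlocks (sympJ p) 0 0 (sympJ q)

/-! ### generic vecMulVec helpers -/

section vmv
variable {n : Type*} [Fintype n] [DecidableEq n]
set_option linter.unusedSectionVars false

lemma vmv_mulVec (a b x : n → ℂ) : (vecMulVec a b) *ᵥ x = (b ⬝ᵥ x) • a := by
  ext i
  simp [vecMulVec, mulVec, dotProduct, Finset.mul_sum, mul_assoc, mul_comm, mul_left_comm]

lemma mul_vmv (A : Matrix n n ℂ) (a b : n → ℂ) :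
    A * vecMulVec a b = vecMulVec (A *ᵥ a) b := by
  ext i j
  simp [vecMulVec, mul_apply, mulVec, dotProduct, Finset.sum_mul, mul_assoc]

lemma vmv_mul (A : Matrix n n ℂ) (a b : n → ℂ) :
    vecMulVec a b * A = vecMulVec a (Aᵀ *ᵥ b) := by
  ext i j
  simp [vecMulVec, mul_apply, mulVec, dotProduct, transpose_apply, Finset.mul_sum,
    mul_assoc, mul_comm, mul_left_comm]

lemma vmv_conjT (a b : n → ℂ) : (vecMulVec a b)ᴴ = vecMulVec (star b) (star a) := by
  ext i j
  simp [vecMulVec, conjTranspose_apply, mul_comm]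

lemma vmv_transpose (a b : n → ℂ) : (vecMulVec a b)ᵀ = vecMulVec b a := by
  ext i j
  simp [vecMulVec, transpose_apply, mul_comm]

lemma vmv_mul_vmv (a b x y : n → ℂ) :
    vecMulVec a b * vecMulVec x y = (b ⬝ᵥ x) • vecMulVec a y := by
  ext i j
  simp [vecMulVec, mul_apply, dotProduct, Finset.sum_mul, Finset.mul_sum,
    mul_comm, mul_left_comm, mul_assoc]

lemma vmv_neg_left (a b : n → ℂ) : vecMulVec (-a) b = -vecMulVec a b := by
  ext i j; simp [vecMulVec]

lemma vmv_neg_right (a b : n → ℂ) : vecMulVec a (-b) = -vecMulVec a b := by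
  ext i j; simp [vecMulVec]

lemma mulVec_dot (M : Matrix n n ℂ) (x z : n → ℂ) :
    (M *ᵥ x) ⬝ᵥ z = x ⬝ᵥ (Mᵀ *ᵥ z) := by
  rw [dotProduct_comm, dotProduct_mulVec, ← mulVec_transpose, dotProduct_comm]

end vmv

/-! ### basic matrix identities -/

lemma neg_one_fb {α β : Type*} [DecidableEq α] [DecidableEq β] :
    (-1 : Matrix (α ⊕ β) (α ⊕ β) ℂ) = fromBlocks (-1) 0 0 (-1) := by
  rw [← fromBlocks_one, fromBlocks_neg]
  simp

lemma sympJ_mul_self (k : ℕ) : sympJ k * sympJ k = -1 := by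
  rw [sympJ, fromBlocks_multiply, neg_one_fb]
  simp

lemma sympJ_transpose (k : ℕ) : (sympJ k)ᵀ = -sympJ k := by
  rw [sympJ, fromBlocks_transpose, fromBlocks_neg]
  simp

lemma sympJ_conjTranspose (k : ℕ) : (sympJ k)ᴴ = -sympJ k := by
  rw [sympJ, fromBlocks_conjTranspose, fromBlocks_neg]
  simp

lemma Hm_mul_Hm : (Hm : Mx p q) * Hm = 1 := by
  rw [Hm, fromBlocks_multiply, ← fromBlocks_one]
  simp

lemma Hm_conjT : (Hm : Mx p q)ᴴ = Hm := by
  rw [Hm, fromBlocks_conjTranspose]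
  simp

lemma Hm_transpose : (Hm : Mx p q)ᵀ = Hm := by
  rw [Hm, fromBlocks_transpose]
  simp

lemma Jf_mul_Jf : (Jf : Mx p q) * Jf = -1 := by
  rw [Jf, fromBlocks_multiply, neg_one_fb]
  simp [sympJ_mul_self]

lemma Jf_transpose : (Jf : Mx p q)ᵀ = -Jf := by
  rw [Jf, fromBlocks_transpose, fromBlocks_neg]
  simp [sympJ_transpose]

lemma Jf_conjT : (Jf : Mx p q)ᴴ = -Jf := by
  rw [Jf, fromBlocks_conjTranspose, fromBlocks_neg]
  simp [sympJ_conjTranspose]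

lemma Hm_mul_Jf : (Hm : Mx p q) * Jf = Om := by
  rw [Hm, Jf, Om, fromBlocks_multiply]
  simp

lemma Jf_mul_Hm : (Jf : Mx p q) * Hm = Om := by
  rw [Hm, Jf, Om, fromBlocks_multiply]
  simp [Matrix.mul_neg]

lemma Jf_mul_Om : (Jf : Mx p q) * Om = -Hm := by
  rw [Jf, Om, Hm, fromBlocks_multiply, fromBlocks_neg]
  simp [sympJ_mul_self, Matrix.mul_neg]


/-! ### the antilinear map σ and the Hermitian pairing Pa -/

noncomputable def sg (x : Vc p q) : Vc p q := Jf *ᵥ (star x)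

noncomputable def Pa (x y : Vc p q) : ℂ := star x ⬝ᵥ (Hm *ᵥ y)

lemma star_Hm_mulVec (y : Vc p q) : star (Hm *ᵥ y) = Hm *ᵥ (star y) := by
  rw [star_mulVec, Hm_conjT, ← Hm_transpose, vecMul_transpose, Hm_transpose]

lemma star_Jf_mulVec (y : Vc p q) : star (Jf *ᵥ y) = Jf *ᵥ (star y) := by
  rw [star_mulVec, Jf_conjT]
  rw [show (-(Jf : Mx p q)) = (-Jf)ᵀᵀ from (transpose_transpose _).symm, vecMul_transpose,
    transpose_neg, Jf_transpose, neg_neg]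

lemma star_sg (x : Vc p q) : star (sg x) = Jf *ᵥ x := by
  rw [sg, star_Jf_mulVec, star_star]

lemma sg_sg (x : Vc p q) : sg (sg x) = -x := by
  rw [sg, star_sg, mulVec_mulVec, Jf_mul_Jf, neg_mulVec, one_mulVec]

lemma sg_add (x y : Vc p q) : sg (x + y) = sg x + sg y := by
  rw [sg, star_add, mulVec_add]; rfl

lemma sg_smul (c : ℂ) (x : Vc p q) : sg (c • x) = star c • sg x := by
  rw [sg, star_smul, mulVec_smul]; rfl

lemma sg_neg (x : Vc p q) : sg (-x) = -sg x := by
  rw [sg, star_neg, mulVec_neg]; rfl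

lemma sg_sub (x y : Vc p q) : sg (x - y) = sg x - sg y := by
  rw [sub_eq_add_neg, sg_add, sg_neg, sub_eq_add_neg]

lemma Pa_add_left (x y z : Vc p q) : Pa (x + y) z = Pa x z + Pa y z := by
  rw [Pa, Pa, Pa, star_add, add_dotProduct]

lemma Pa_add_right (x y z : Vc p q) : Pa x (y + z) = Pa x y + Pa x z := by
  rw [Pa, Pa, Pa, mulVec_add, dotProduct_add]

lemma Pa_smul_left (c : ℂ) (x z : Vc p q) : Pa (c • x) z = star c * Pa x z := by
  rw [Pa, Pa, star_smul, smul_dotProduct]; rfl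

lemma Pa_smul_right (c : ℂ) (x z : Vc p q) : Pa x (c • z) = c * Pa x z := by
  rw [Pa, Pa, mulVec_smul, dotProduct_smul]; rfl

lemma Pa_neg_left (x z : Vc p q) : Pa (-x) z = -Pa x z := by
  rw [Pa, Pa, star_neg, neg_dotProduct]

lemma Pa_neg_right (x z : Vc p q) : Pa x (-z) = -Pa x z := by
  rw [Pa, Pa, mulVec_neg, dotProduct_neg]

lemma Pa_sub_left (x y z : Vc p q) : Pa (x - y) z = Pa x z - Pa y z := by
  rw [sub_eq_add_neg, Pa_add_left, Pa_neg_left, sub_eq_add_neg]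

lemma Pa_sub_right (x y z : Vc p q) : Pa x (y - z) = Pa x y - Pa x z := by
  rw [sub_eq_add_neg, Pa_add_right, Pa_neg_right, sub_eq_add_neg]

lemma Pa_conj (x y : Vc p q) : star (Pa x y) = Pa y x := by
  rw [Pa, Pa, star_dotProduct, star_star, star_Hm_mulVec, dotProduct_comm,
    dotProduct_mulVec, ← Hm_transpose, vecMul_transpose, Hm_transpose]
  exact dotProduct_comm _ _

lemma Pa_self_real (x : Vc p q) : star (Pa x x) = Pa x x := Pa_conj x x

lemma Pa_sg_left (x y : Vc p q) : Pa (sg x) y = -(x ⬝ᵥ (Om *ᵥ y)) := by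
  rw [Pa, star_sg, mulVec_dot, mulVec_mulVec, Jf_transpose, Matrix.neg_mul, Jf_mul_Hm,
    neg_mulVec, dotProduct_neg]

lemma Om_transpose : (Om : Mx p q)ᵀ = -Om := by
  rw [show (Om : Mx p q) = fromBlocks (sympJ p) 0 0 (-(sympJ q)) from rfl,
    fromBlocks_transpose, fromBlocks_neg]
  simp [sympJ_transpose]

lemma Pb_skew (x y : Vc p q) : Pa (sg x) y = -Pa (sg y) x := by
  rw [Pa_sg_left, Pa_sg_left, neg_neg]
  rw [dotProduct_mulVec, ← mulVec_transpose, Om_transpose, neg_mulVec, neg_dotProduct,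
    neg_neg, dotProduct_comm]

lemma Pb_self (x : Vc p q) : Pa (sg x) x = 0 := by
  have h := Pb_skew x x
  have h2 : (2:ℂ) * Pa (sg x) x = 0 := by linear_combination h
  exact (mul_eq_zero.mp h2).resolve_left two_ne_zero

lemma Om_mul_Jf : (Om : Mx p q) * Jf = -Hm := by
  rw [show (Om : Mx p q) = fromBlocks (sympJ p) 0 0 (-(sympJ q)) from rfl,
    show (Jf : Mx p q) = fromBlocks (sympJ p) 0 0 (sympJ q) from rfl,
    show (Hm : Mx p q) = fromBlocks 1 0 0 (-1) from rfl,
    fromBlocks_multiply, fromBlocks_neg]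
  simp [sympJ_mul_self, Matrix.neg_mul]

lemma Pa_sg_sg (x y : Vc p q) : Pa (sg x) (sg y) = star (Pa x y) := by
  rw [Pa_sg_left, show sg y = Jf *ᵥ star y from rfl, mulVec_mulVec, Om_mul_Jf,
    neg_mulVec, dotProduct_neg, neg_neg, Pa, star_dotProduct, star_star, star_Hm_mulVec,
    dotProduct_comm]

lemma Pa_sg_right (x y : Vc p q) : Pa x (sg y) = -star (Pa (sg x) y) := by
  rw [← Pa_conj, Pb_skew, star_neg]

/-! ### coordinates -/

lemma Hm_mulVec_inl (y : Vc p q) (k : Fin p ⊕ Fin p) :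
    (Hm *ᵥ y) (Sum.inl k) = y (Sum.inl k) := by
  rw [show (Hm : Mx p q) = fromBlocks 1 0 0 (-1) from rfl, fromBlocks_mulVec]
  simp

lemma Hm_mulVec_inr (y : Vc p q) (k : Fin q ⊕ Fin q) :
    (Hm *ᵥ y) (Sum.inr k) = -y (Sum.inr k) := by
  rw [show (Hm : Mx p q) = fromBlocks 1 0 0 (-1) from rfl, fromBlocks_mulVec]
  simp [neg_mulVec]

lemma sympJ_mulVec {k : ℕ} (u : Fin k ⊕ Fin k → ℂ) :
    sympJ k *ᵥ u = Sum.elim (fun i => u (Sum.inr i)) (fun i => -u (Sum.inl i)) := by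
  rw [sympJ, fromBlocks_mulVec]
  ext (i|i) <;> simp [neg_mulVec]

lemma sg_ll (v : Vc p q) (i : Fin p) :
    sg v (Sum.inl (Sum.inl i)) = star (v (Sum.inl (Sum.inr i))) := by
  rw [sg, show (Jf : Mx p q) = fromBlocks (sympJ p) 0 0 (sympJ q) from rfl, fromBlocks_mulVec]
  simp [sympJ_mulVec]

lemma sg_lr (v : Vc p q) (i : Fin p) :
    sg v (Sum.inl (Sum.inr i)) = -star (v (Sum.inl (Sum.inl i))) := by
  rw [sg, show (Jf : Mx p q) = fromBlocks (sympJ p) 0 0 (sympJ q) from rfl, fromBlocks_mulVec]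
  simp [sympJ_mulVec]

lemma sg_rl (v : Vc p q) (i : Fin q) :
    sg v (Sum.inr (Sum.inl i)) = star (v (Sum.inr (Sum.inr i))) := by
  rw [sg, show (Jf : Mx p q) = fromBlocks (sympJ p) 0 0 (sympJ q) from rfl, fromBlocks_mulVec]
  simp [sympJ_mulVec]

lemma sg_rr (v : Vc p q) (i : Fin q) :
    sg v (Sum.inr (Sum.inr i)) = -star (v (Sum.inr (Sum.inl i))) := by
  rw [sg, show (Jf : Mx p q) = fromBlocks (sympJ p) 0 0 (sympJ q) from rfl, fromBlocks_mulVec]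
  simp [sympJ_mulVec]

lemma Pa_coord (x y : Vc p q) :
    Pa x y = (∑ k : Fin p ⊕ Fin p, star (x (Sum.inl k)) * y (Sum.inl k)) -
      ∑ k : Fin q ⊕ Fin q, star (x (Sum.inr k)) * y (Sum.inr k) := by
  rw [Pa, dotProduct, Fintype.sum_sum_type]
  simp only [Pi.star_apply, Hm_mulVec_inl, Hm_mulVec_inr, mul_neg]
  rw [Finset.sum_neg_distrib, sub_eq_add_neg]

/-! ### basis vectors -/

def bv (j : Ix p q) : Vc p q := Pi.single j 1

lemma star_bv (j : Ix p q) : star (bv j : Vc p q) = bv j := by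
  funext i
  by_cases h : i = j <;> simp [bv, Pi.single_apply, h]

lemma Pa_bv_inl (k : Fin p ⊕ Fin p) (y : Vc p q) :
    Pa (bv (Sum.inl k)) y = y (Sum.inl k) := by
  rw [Pa, star_bv, bv, single_dotProduct, one_mul, Hm_mulVec_inl]

lemma Pa_bv_inr (k : Fin q ⊕ Fin q) (y : Vc p q) :
    Pa (bv (Sum.inr k)) y = -y (Sum.inr k) := by
  rw [Pa, star_bv, bv, single_dotProduct, one_mul, Hm_mulVec_inr]

lemma bv_apply (j i : Ix p q) : (bv j : Vc p q) i = if i = j then 1 else 0 := by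
  rw [bv, Pi.single_apply]

/-! ### the group -/

def InG (A : Mx p q) : Prop := Aᴴ * Hm * A = Hm ∧ Jf * (Aᴴ)ᵀ = A * Jf

lemma InG_one : InG (1 : Mx p q) := by
  constructor <;> simp

lemma InG_mul {A B : Mx p q} (hA : InG A) (hB : InG B) : InG (A * B) := by
  constructor
  · rw [conjTranspose_mul]
    calc Bᴴ * Aᴴ * Hm * (A * B) = Bᴴ * (Aᴴ * Hm * A) * B := by
          simp only [Matrix.mul_assoc]
      _ = Hm := by rw [hA.1]; simpa [Matrix.mul_assoc] using hB.1
  · rw [conjTranspose_mul, transpose_mul]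
    calc Jf * ((Aᴴ)ᵀ * (Bᴴ)ᵀ) = (Jf * (Aᴴ)ᵀ) * (Bᴴ)ᵀ := by rw [Matrix.mul_assoc]
      _ = A * (Jf * (Bᴴ)ᵀ) := by rw [hA.2, Matrix.mul_assoc]
      _ = A * B * Jf := by rw [hB.2, Matrix.mul_assoc]

lemma InG.conjT_Jf {A : Mx p q} (hA : InG A) : Aᴴ * Jf = Jf * Aᵀ := by
  have h := congrArg Matrix.transpose hA.2
  rw [transpose_mul, transpose_mul, transpose_transpose, Jf_transpose] at h
  rw [Matrix.mul_neg, Matrix.neg_mul] at h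
  exact neg_inj.mp h

lemma Hm_Hm_cancel (X : Mx p q) : Hm * (Hm * X) = X := by
  rw [← Matrix.mul_assoc, Hm_mul_Hm, Matrix.one_mul]

lemma JfHm_comm : (Jf : Mx p q) * Hm = Hm * Jf := by rw [Jf_mul_Hm, Hm_mul_Jf]

lemma InG.symplectic {A : Mx p q} (hA : InG A) : Aᵀ * Om * A = Om := by
  have hT : Aᵀ = -(Jf * (Aᴴ * Jf)) := by
    have h := hA.conjT_Jf
    calc Aᵀ = -(Jf * Jf) * Aᵀ := by rw [Jf_mul_Jf]; simp
      _ = -(Jf * (Jf * Aᵀ)) := by rw [Matrix.neg_mul, Matrix.mul_assoc]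
      _ = -(Jf * (Aᴴ * Jf)) := by rw [h]
  calc Aᵀ * Om * A = -(Jf * (Aᴴ * Jf)) * Om * A := by rw [hT]
    _ = -(Jf * (Aᴴ * (Jf * Om)) * A) := by simp only [Matrix.neg_mul, Matrix.mul_assoc]
    _ = -(Jf * (Aᴴ * (-Hm)) * A) := by rw [Jf_mul_Om]
    _ = Jf * (Aᴴ * Hm * A) := by simp only [Matrix.mul_neg, Matrix.neg_mul, neg_neg,
          Matrix.mul_assoc]
    _ = Om := by rw [hA.1, Jf_mul_Hm]

lemma InG.det_isUnit {A : Mx p q} (hA : InG A) : IsUnit A.det := by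
  have h := congrArg Matrix.det hA.1
  rw [det_mul, det_mul] at h
  have hH : (Hm : Mx p q).det * (Hm : Mx p q).det = 1 := by
    rw [← det_mul, Hm_mul_Hm, det_one]
  have hH0 : (Hm : Mx p q).det ≠ 0 := by
    intro h0; rw [h0, mul_zero] at hH; exact one_ne_zero hH.symm
  have hdet : A.det * Aᴴ.det = 1 := by
    have h2 : (Aᴴ.det * A.det - 1) * (Hm : Mx p q).det = 0 := by ring_nf; linear_combination h
    have h3 := (mul_eq_zero.mp h2).resolve_right hH0
    linear_combination h3
  exact IsUnit.of_mul_eq_one _ hdet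

lemma InG.inv {A : Mx p q} (hA : InG A) :
    InG (Hm * Aᴴ * Hm) ∧ (Hm * Aᴴ * Hm) * A = 1 ∧ A * (Hm * Aᴴ * Hm) = 1 := by
  have hBA : (Hm * Aᴴ * Hm) * A = 1 := by
    have h1 := hA.1
    calc (Hm * Aᴴ * Hm) * A = Hm * (Aᴴ * Hm * A) := by simp only [Matrix.mul_assoc]
      _ = 1 := by rw [h1, Hm_mul_Hm]
  have hAB : A * (Hm * Aᴴ * Hm) = 1 := mul_eq_one_comm.mp hBA
  have hAB' : A * (Hm * (Aᴴ * Hm)) = 1 := by simpa only [Matrix.mul_assoc] using hAB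
  have hAHA : A * (Hm * Aᴴ) = Hm := by
    have h := congrArg (fun M : Mx p q => M * Hm) hAB'
    simp only [Matrix.one_mul, Matrix.mul_assoc] at h
    rw [Hm_mul_Hm, Matrix.mul_one] at h
    exact h
  have hct : (Hm * Aᴴ * Hm)ᴴ = Hm * A * Hm := by
    rw [conjTranspose_mul, conjTranspose_mul, Hm_conjT, conjTranspose_conjTranspose,
      Matrix.mul_assoc]
  refine ⟨⟨?_, ?_⟩, hBA, hAB⟩
  · rw [hct]
    simp only [Matrix.mul_assoc]
    rw [Hm_Hm_cancel, hAB', Matrix.mul_one]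
  · rw [hct, transpose_mul, transpose_mul, Hm_transpose]
    simp only [Matrix.mul_assoc]
    calc Jf * (Hm * (Aᵀ * Hm)) = Hm * (Jf * (Aᵀ * Hm)) := by
          rw [← Matrix.mul_assoc, JfHm_comm, Matrix.mul_assoc]
      _ = Hm * (Aᴴ * (Jf * Hm)) := by
          rw [← Matrix.mul_assoc Jf, ← hA.conjT_Jf, Matrix.mul_assoc]
      _ = Hm * (Aᴴ * (Hm * Jf)) := by rw [JfHm_comm]


/-! ### Householder reflections -/

lemma householder (z : Vc p q) (hn : Pa z z ≠ 0) :
    ∃ R : Mx p q, InG R ∧ R * R = 1 ∧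
      ∀ x, R *ᵥ x = x - (2 / Pa z z) • (Pa z x • z + Pa (sg z) x • sg z) := by
  set w : Vc p q := sg z with hw
  set u1 : Vc p q := star (Hm *ᵥ z) with hu1
  set u2 : Vc p q := star (Hm *ᵥ w) with hu2
  set Q : Mx p q := vecMulVec z u1 + vecMulVec w u2 with hQ
  set n : ℂ := Pa z z with hnz
  set c : ℂ := 2 / n with hc
  have hcstar : star c = c := by
    rw [hc, star_div₀, hnz, Pa_self_real]
    norm_num
  have hu1d : ∀ x, u1 ⬝ᵥ x = Pa z x := by
    intro x
    rw [hu1, star_Hm_mulVec, mulVec_dot, Hm_transpose, Pa]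
  have hu2d : ∀ x, u2 ⬝ᵥ x = Pa w x := by
    intro x
    rw [hu2, star_Hm_mulVec, mulVec_dot, Hm_transpose, Pa]
  have hzw : Pa z w = 0 := by
    rw [hw, Pa_sg_right, Pb_self, star_zero, neg_zero]
  have hwz : Pa w z = 0 := Pb_self z
  have hww : Pa w w = n := by
    rw [hw, Pa_sg_sg, ← hnz, Pa_self_real]
  have hQ2 : Q * Q = n • Q := by
    rw [hQ, Matrix.add_mul, Matrix.mul_add, Matrix.mul_add, vmv_mul_vmv, vmv_mul_vmv,
      vmv_mul_vmv, vmv_mul_vmv, hu1d, hu1d, hu2d, hu2d, hzw, hwz, ← hnz, hww]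
    simp [smul_add]
  have hstaru1 : star u1 = Hm *ᵥ z := by rw [hu1, star_star]
  have hstaru2 : star u2 = Hm *ᵥ w := by rw [hu2, star_star]
  have hQH : Qᴴ * Hm = Hm * Q := by
    rw [hQ, conjTranspose_add, vmv_conjT, vmv_conjT, Matrix.add_mul, Matrix.mul_add,
      hstaru1, hstaru2, vmv_mul, vmv_mul, Hm_transpose, mul_vmv, mul_vmv, hu1, hu2,
      star_Hm_mulVec, star_Hm_mulVec]
  have hQHQ : Qᴴ * (Hm * Q) = n • (Hm * Q) := by
    rw [← Matrix.mul_assoc, hQH, Matrix.mul_assoc, hQ2, Matrix.mul_smul]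
  have hkey : c * c * n = c + c := by
    rw [hc]; field_simp; ring
  refine ⟨1 - c • Q, ⟨?_, ?_⟩, ?_, ?_⟩
  · -- Hermitian condition
    rw [conjTranspose_sub, conjTranspose_smul, conjTranspose_one, hcstar]
    simp only [Matrix.sub_mul, Matrix.mul_sub, Matrix.smul_mul, Matrix.mul_smul,
      Matrix.one_mul, Matrix.mul_one, Matrix.mul_assoc]
    rw [hQH, hQHQ, smul_sub, smul_smul, smul_smul, hkey, add_smul]
    abel
  · -- quaternionic condition
    have hconjQ : (Qᴴ)ᵀ = vecMulVec (star z) (Hm *ᵥ z) + vecMulVec (star w) (Hm *ᵥ w) := by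
      rw [hQ, conjTranspose_add, vmv_conjT, vmv_conjT, transpose_add, vmv_transpose,
        vmv_transpose, hstaru1, hstaru2]
    have e1 : (Jf : Mx p q) *ᵥ star z = w := by rw [hw]; rfl
    have e2 : (Jf : Mx p q) *ᵥ star w = -z := by
      rw [hw, star_sg, mulVec_mulVec, Jf_mul_Jf, neg_mulVec, one_mulVec]
    have e3 : (Jf : Mx p q) *ᵥ u1 = Hm *ᵥ w := by
      rw [hu1, star_Hm_mulVec, mulVec_mulVec, Jf_mul_Hm, hw,
        show sg z = Jf *ᵥ star z from rfl, mulVec_mulVec, Hm_mul_Jf]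
    have e4 : (Jf : Mx p q) *ᵥ u2 = -(Hm *ᵥ z) := by
      have hsw : star w = Jf *ᵥ z := by rw [hw, star_sg]
      rw [hu2, star_Hm_mulVec, hsw]
      simp only [mulVec_mulVec]
      rw [← Matrix.mul_assoc, Jf_mul_Hm, Om_mul_Jf, neg_mulVec]
    have hJQ : Jf * (Qᴴ)ᵀ = Q * Jf := by
      rw [hconjQ, Matrix.mul_add, mul_vmv, mul_vmv, e1, e2, vmv_neg_left]
      rw [hQ, Matrix.add_mul, vmv_mul, vmv_mul, Jf_transpose, neg_mulVec, neg_mulVec,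
        vmv_neg_right, vmv_neg_right, e3, e4, vmv_neg_right, neg_neg]
      abel
    rw [conjTranspose_sub, conjTranspose_smul, conjTranspose_one, hcstar, transpose_sub,
      transpose_smul, transpose_one, Matrix.mul_sub, Matrix.sub_mul, Matrix.mul_smul,
      Matrix.smul_mul, Matrix.mul_one, Matrix.one_mul, hJQ]
  · -- involution
    simp only [Matrix.sub_mul, Matrix.mul_sub, Matrix.smul_mul, Matrix.mul_smul,
      Matrix.one_mul, Matrix.mul_one]
    rw [hQ2, smul_sub, smul_smul, smul_smul, hkey, add_smul]
    abel
  · -- action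
    intro x
    rw [sub_mulVec, one_mulVec, smul_mulVec, hQ, add_mulVec, vmv_mulVec, vmv_mulVec,
      hu1d, hu2d, hc, hnz, hw]


/-! ### rotating an isotropic vector into a quaternionic line -/

lemma star_ofReal (r : ℝ) : star ((r : ℂ)) = (r : ℂ) := by
  rw [Complex.star_def, Complex.conj_ofReal]

lemma conj_mul_self (z : ℂ) : star z * z = (Complex.normSq z : ℂ) := by
  rw [Complex.star_def, mul_comm, Complex.mul_conj]

lemma Pa_combo_self (y : Vc p q) (al be : ℂ) (hy : Pa y y = 0) :
    Pa (al • y + be • sg y) (al • y + be • sg y) = 0 := by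
  have h1 : Pa (sg y) y = 0 := Pb_self y
  have h2 : Pa y (sg y) = 0 := by rw [Pa_sg_right, h1, star_zero, neg_zero]
  have h3 : Pa (sg y) (sg y) = 0 := by rw [Pa_sg_sg, hy, star_zero]
  simp only [Pa_add_left, Pa_add_right, Pa_smul_left, Pa_smul_right, hy, h1, h2, h3]
  ring

lemma toLine (x y : Vc p q) (hx : Pa x x = 0) (hy : Pa y y = 0)
    (h : ¬(Pa y x = 0 ∧ Pa (sg y) x = 0)) :
    ∃ R : Mx p q, ∃ al be : ℂ, InG R ∧ R * R = 1 ∧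
      star al * al + star be * be = 1 ∧
      R *ᵥ x = al • y + be • sg y := by
  set g : ℂ := Pa y x with hg
  set t : ℂ := Pa (sg y) x with ht
  have hGpos : 0 < Complex.normSq g + Complex.normSq t := by
    rcases not_and_or.mp h with h' | h'
    · have h1 := Complex.normSq_pos.mpr h'
      have h2 := Complex.normSq_nonneg t
      linarith
    · have h1 := Complex.normSq_pos.mpr h'
      have h2 := Complex.normSq_nonneg g
      linarith
  set Gr : ℝ := Real.sqrt (Complex.normSq g + Complex.normSq t) with hGr
  have hGrpos : 0 < Gr := Real.sqrt_pos.mpr hGpos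
  have hGrC : ((Gr : ℂ)) ≠ 0 := by
    simpa using ne_of_gt hGrpos
  have hGr2 : ((Gr : ℂ)) * Gr = ((Complex.normSq g + Complex.normSq t : ℝ) : ℂ) := by
    rw [← Complex.ofReal_mul, Real.mul_self_sqrt hGpos.le]
  set al : ℂ := g / Gr with hal
  set be : ℂ := t / Gr with hbe
  have hnorm : star al * al + star be * be = 1 := by
    rw [hal, hbe, star_div₀, star_div₀, star_ofReal, div_mul_div_comm, div_mul_div_comm,
      conj_mul_self, conj_mul_self, ← add_div, hGr2]
    rw [show ((Complex.normSq g : ℂ) + (Complex.normSq t : ℂ)) =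
        ((Complex.normSq g + Complex.normSq t : ℝ) : ℂ) by push_cast; ring,
      div_self (Complex.ofReal_ne_zero.mpr (ne_of_gt hGpos))]
  set u : Vc p q := al • y + be • sg y with hu
  have hu_iso : Pa u u = 0 := Pa_combo_self y al be hy
  have hsgu : sg u = star al • sg y - star be • y := by
    rw [hu, sg_add, sg_smul, sg_smul, sg_sg, smul_neg, ← sub_eq_add_neg]
  have hub : Pa (sg u) x = 0 := by
    rw [hsgu, Pa_sub_left, Pa_smul_left, Pa_smul_left, star_star, star_star, ← hg, ← ht,
      hal, hbe]
    field_simp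
    ring
  have hua : Pa u x = (Gr : ℂ) := by
    rw [hu, Pa_add_left, Pa_smul_left, Pa_smul_left, ← hg, ← ht, hal, hbe, star_div₀,
      star_div₀, star_ofReal, div_mul_eq_mul_div, div_mul_eq_mul_div, ← add_div,
      conj_mul_self, conj_mul_self,
      show ((Complex.normSq g : ℂ) + (Complex.normSq t : ℂ)) =
        ((Complex.normSq g + Complex.normSq t : ℝ) : ℂ) by push_cast; ring,
      ← hGr2, mul_div_assoc, div_self hGrC, mul_one]
  set z : Vc p q := x - u with hz
  have hxu : Pa x u = (Gr : ℂ) := by rw [← Pa_conj, hua, star_ofReal]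
  have hzz : Pa z z = -(2 * (Gr : ℂ)) := by
    rw [hz, Pa_sub_left, Pa_sub_right, Pa_sub_right, hx, hua, hxu, hu_iso]; ring
  have hzz0 : Pa z z ≠ 0 := by
    rw [hzz, neg_ne_zero]
    exact mul_ne_zero two_ne_zero hGrC
  obtain ⟨R, hR, hR2, hact⟩ := householder z hzz0
  refine ⟨R, al, be, hR, hR2, hnorm, ?_⟩
  rw [hact x]
  have hzx : Pa z x = -(Gr : ℂ) := by rw [hz, Pa_sub_left, hx, hua]; ring
  have hsgzx : Pa (sg z) x = 0 := by
    rw [hz, sg_sub, Pa_sub_left, Pb_self, hub, sub_zero]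
  rw [hzx, hsgzx, hzz, zero_smul, add_zero, smul_smul,
    show (2 / -(2 * (Gr : ℂ))) * (-(Gr : ℂ)) = 1 by field_simp, one_smul, hz,
    sub_sub_cancel]

/-! ### quaternion scalar matrices -/

def sBlk (k : ℕ) (a b : ℂ) : Matrix (Fin k ⊕ Fin k) (Fin k ⊕ Fin k) ℂ :=
  fromBlocks (a • 1) ((-star b) • 1) (b • 1) ((star a) • 1)

def Smat (a b : ℂ) : Mx p q := fromBlocks (sBlk p a b) 0 0 (sBlk q a b)

lemma smul_one_mul_smul_one {k : ℕ} (x y : ℂ) :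
    (x • (1 : Matrix (Fin k) (Fin k) ℂ)) * (y • 1) = (x * y) • 1 := by
  rw [Matrix.smul_mul, Matrix.mul_smul, smul_smul, Matrix.one_mul]

lemma sBlk_mul {k : ℕ} (a b e f : ℂ) :
    sBlk k a b * sBlk k e f = sBlk k (a * e - star b * f) (b * e + star a * f) := by
  rw [sBlk, sBlk, sBlk, fromBlocks_multiply]
  rw [fromBlocks_inj]
  refine ⟨?_, ?_, ?_, ?_⟩ <;>
    simp only [Matrix.neg_mul, Matrix.mul_neg, smul_one_mul_smul_one, star_add, star_sub,
      star_mul', star_star, star_neg, ← neg_smul, ← sub_smul, ← add_smul] <;>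
    congr 1 <;> ring

lemma sBlk_conjTranspose {k : ℕ} (a b : ℂ) : (sBlk k a b)ᴴ = sBlk k (star a) (-b) := by
  rw [sBlk, sBlk, fromBlocks_conjTranspose]
  simp only [conjTranspose_smul, conjTranspose_one, star_star, star_neg, neg_neg]

lemma sBlk_one {k : ℕ} : sBlk k 1 0 = 1 := by
  rw [sBlk, ← fromBlocks_one]
  simp

lemma sBlk_inv_mul {k : ℕ} {a b : ℂ} (h : star a * a + star b * b = 1) :
    sBlk k (star a) (-b) * sBlk k a b = 1 := by
  rw [sBlk_mul, show star a * a - star (-b) * b = 1 by rw [star_neg]; linear_combination h,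
    show (-b) * a + star (star a) * b = 0 by rw [star_star]; ring, sBlk_one]

lemma Smat_mul {a b e f : ℂ} :
    (Smat a b : Mx p q) * Smat e f = Smat (a * e - star b * f) (b * e + star a * f) := by
  rw [Smat, Smat, Smat, fromBlocks_multiply]
  simp [sBlk_mul]

lemma Smat_one : (Smat 1 0 : Mx p q) = 1 := by
  rw [Smat, ← fromBlocks_one]
  simp [sBlk_one]

lemma Smat_inv_mul {a b : ℂ} (h : star a * a + star b * b = 1) :
    (Smat (star a) (-b) : Mx p q) * Smat a b = 1 := by
  rw [Smat_mul, show star a * a - star (-b) * b = 1 by rw [star_neg]; linear_combination h,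
    show (-b) * a + star (star a) * b = 0 by rw [star_star]; ring, Smat_one]

lemma Smat_mul_inv {a b : ℂ} (h : star a * a + star b * b = 1) :
    (Smat a b : Mx p q) * Smat (star a) (-b) = 1 := by
  rw [Smat_mul, show a * star a - star b * (-b) = 1 by linear_combination h,
    show b * star a + star a * (-b) = 0 by ring, Smat_one]

lemma sBlk_symp {k : ℕ} (a b : ℂ) :
    sympJ k * ((sBlk k a b)ᴴ)ᵀ = sBlk k a b * sympJ k := by
  rw [sBlk_conjTranspose, sBlk, sBlk, sympJ, fromBlocks_transpose, fromBlocks_multiply,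
    fromBlocks_multiply]
  rw [fromBlocks_inj]
  refine ⟨?_, ?_, ?_, ?_⟩ <;>
    simp [Matrix.smul_mul, Matrix.mul_smul, transpose_smul, transpose_one, neg_smul,
      star_star]

lemma Smat_InG {a b : ℂ} (h : star a * a + star b * b = 1) : InG (Smat a b : Mx p q) := by
  constructor
  · rw [show (Smat a b : Mx p q)ᴴ = fromBlocks (sBlk p a b)ᴴ 0 0 (sBlk q a b)ᴴ by
        rw [Smat, fromBlocks_conjTranspose]; simp,
      show (Hm : Mx p q) = fromBlocks 1 0 0 (-1) from rfl, Smat, fromBlocks_multiply,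
      fromBlocks_multiply]
    rw [fromBlocks_inj]
    refine ⟨?_, ?_, ?_, ?_⟩ <;>
      simp [sBlk_conjTranspose, Matrix.mul_neg, Matrix.neg_mul] <;>
      exact sBlk_inv_mul h
  · rw [show (Smat a b : Mx p q)ᴴᵀ = fromBlocks ((sBlk p a b)ᴴ)ᵀ 0 0 ((sBlk q a b)ᴴ)ᵀ by
        rw [Smat, fromBlocks_conjTranspose, fromBlocks_transpose]; simp,
      show (Jf : Mx p q) = fromBlocks (sympJ p) 0 0 (sympJ q) from rfl, Smat,
      fromBlocks_multiply, fromBlocks_multiply]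
    rw [fromBlocks_inj]
    refine ⟨?_, ?_, ?_, ?_⟩ <;> simp [sBlk_symp]

/-! ### the canonical isotropic vector -/

variable (i0 : Fin p) (k0 : Fin q)

def cv : Vc p q := bv (Sum.inl (Sum.inl i0)) + bv (Sum.inr (Sum.inl k0))

lemma sg_bv_p1 : sg (bv (Sum.inl (Sum.inl i0)) : Vc p q) = -bv (Sum.inl (Sum.inr i0)) := by
  funext i
  rcases i with (i | i) <;> rcases i with i | i <;>
    simp [sg_ll, sg_lr, sg_rl, sg_rr, bv_apply, apply_ite]

lemma sg_bv_q1 : sg (bv (Sum.inr (Sum.inl k0)) : Vc p q) = -bv (Sum.inr (Sum.inr k0)) := by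
  funext i
  rcases i with (i | i) <;> rcases i with i | i <;>
    simp [sg_ll, sg_lr, sg_rl, sg_rr, bv_apply, apply_ite]

lemma sg_cv : sg (cv i0 k0 : Vc p q) =
    -(bv (Sum.inl (Sum.inr i0)) + bv (Sum.inr (Sum.inr k0))) := by
  rw [cv, sg_add, sg_bv_p1, sg_bv_q1]
  abel

lemma cv_iso : Pa (cv i0 k0) (cv i0 k0) = 0 := by
  rw [cv, Pa_add_left, Pa_add_right, Pa_add_right, Pa_bv_inl, Pa_bv_inl, Pa_bv_inr,
    Pa_bv_inr, bv_apply, bv_apply, bv_apply, bv_apply]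
  simp

/-! ### action of Smat on the canonical vectors -/

lemma Smat_mulVec_p (a b : ℂ) (i1 : Fin p) :
    (Smat a b : Mx p q) *ᵥ bv (Sum.inl (Sum.inl i1)) =
      a • bv (Sum.inl (Sum.inl i1)) + b • bv (Sum.inl (Sum.inr i1)) := by
  rw [bv, mulVec_single]
  funext i
  rcases i with (i | i) <;> rcases i with i | i <;>
    simp [Smat, sBlk, bv_apply, Pi.single_apply, Matrix.one_apply, mul_ite]

lemma Smat_mulVec_q (a b : ℂ) (k1 : Fin q) :
    (Smat a b : Mx p q) *ᵥ bv (Sum.inr (Sum.inl k1)) =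
      a • bv (Sum.inr (Sum.inl k1)) + b • bv (Sum.inr (Sum.inr k1)) := by
  rw [bv, mulVec_single]
  funext i
  rcases i with (i | i) <;> rcases i with i | i <;>
    simp [Smat, sBlk, bv_apply, Pi.single_apply, Matrix.one_apply, mul_ite]

lemma Smat_mulVec_p2 (a b : ℂ) (i1 : Fin p) :
    (Smat a b : Mx p q) *ᵥ bv (Sum.inl (Sum.inr i1)) =
      (-star b) • bv (Sum.inl (Sum.inl i1)) + (star a) • bv (Sum.inl (Sum.inr i1)) := by
  rw [bv, mulVec_single]
  funext i
  rcases i with (i | i) <;> rcases i with i | i <;>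
    simp [Smat, sBlk, bv_apply, Pi.single_apply, Matrix.one_apply, mul_ite]

lemma Smat_mulVec_q2 (a b : ℂ) (k1 : Fin q) :
    (Smat a b : Mx p q) *ᵥ bv (Sum.inr (Sum.inr k1)) =
      (-star b) • bv (Sum.inr (Sum.inl k1)) + (star a) • bv (Sum.inr (Sum.inr k1)) := by
  rw [bv, mulVec_single]
  funext i
  rcases i with (i | i) <;> rcases i with i | i <;>
    simp [Smat, sBlk, bv_apply, Pi.single_apply, Matrix.one_apply, mul_ite]

lemma sstep (al be : ℂ) (h : star al * al + star be * be = 1) :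
    (Smat (star al) be : Mx p q) *ᵥ (al • cv i0 k0 + be • sg (cv i0 k0)) = cv i0 k0 := by
  rw [sg_cv, cv]
  simp only [mulVec_add, mulVec_smul, mulVec_neg, Smat_mulVec_p, Smat_mulVec_q,
    Smat_mulVec_p2, Smat_mulVec_q2, star_star]
  match_scalars
  · linear_combination h
  · ring
  · linear_combination h
  · ring

/-! ### pairing against a quaternionic combination -/

lemma Pa_left_combo (w y : Vc p q) (al be : ℂ) :
    Pa w (al • y + be • sg y) = al * Pa w y - be * star (Pa (sg w) y) := by
  rw [Pa_add_right, Pa_smul_right, Pa_smul_right, Pa_sg_right]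
  ring

lemma Pa_sgleft_combo (w y : Vc p q) (al be : ℂ) :
    Pa (sg w) (al • y + be • sg y) = al * Pa (sg w) y + be * star (Pa w y) := by
  rw [Pa_add_right, Pa_smul_right, Pa_smul_right, Pa_sg_sg]

lemma combo_nonzero (w y : Vc p q) (al be : ℂ) (hn : star al * al + star be * be = 1)
    (hAB : ¬(Pa w y = 0 ∧ Pa (sg w) y = 0)) :
    ¬(Pa w (al • y + be • sg y) = 0 ∧ Pa (sg w) (al • y + be • sg y) = 0) := by
  rintro ⟨h1, h2⟩
  rw [Pa_left_combo] at h1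
  rw [Pa_sgleft_combo] at h2
  set A := Pa w y with hA
  set B := Pa (sg w) y with hB
  have h2' : star al * star B + star be * A = 0 := by
    have := congrArg star h2
    simpa [star_add, star_mul', star_star, mul_comm] using this
  have hA0 : A = 0 := by linear_combination (star al) * h1 + be * h2' - A * hn
  have h1' : star al * star A - star be * B = 0 := by
    have := congrArg star h1
    simpa [star_sub, star_mul', star_star, mul_comm] using this
  have hB0 : B = 0 := by linear_combination (star al) * h2 - be * h1' - B * hn
  exact hAB ⟨hA0, hB0⟩

/-! ### reaching the canonical vector -/

lemma reach1 (v : Vc p q) (hiso : Pa v v = 0)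
    (h : ¬(Pa (cv i0 k0) v = 0 ∧ Pa (sg (cv i0 k0)) v = 0)) :
    ∃ A B : Mx p q, InG A ∧ InG B ∧ B * A = 1 ∧ A *ᵥ v = cv i0 k0 := by
  have hc : ¬(Pa (cv i0 k0) v = 0 ∧ Pa (sg (cv i0 k0)) v = 0) := h
  obtain ⟨R, al, be, hR, hR2, hnorm, hact⟩ := toLine v (cv i0 k0) hiso (cv_iso i0 k0) hc
  have hS : InG (Smat (star al) be : Mx p q) := by
    apply Smat_InG
    rw [star_star]
    linear_combination hnorm
  have hSinv : InG (Smat al (-be) : Mx p q) := by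
    apply Smat_InG
    simp only [star_neg]
    linear_combination hnorm
  have hSS : (Smat al (-be) : Mx p q) * Smat (star al) be = 1 := by
    have := Smat_mul_inv (p := p) (q := q) (a := al) (b := -be) ?_
    · simpa [star_star] using this
    · simp only [star_neg]; linear_combination hnorm
  refine ⟨Smat (star al) be * R, R * Smat al (-be), InG_mul hS hR, InG_mul hR hSinv, ?_, ?_⟩
  · calc R * Smat al (-be) * (Smat (star al) be * R)
        = R * (Smat al (-be) * Smat (star al) be) * R := by
          simp only [Matrix.mul_assoc]
      _ = R * R := by rw [hSS, Matrix.mul_one]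
      _ = 1 := hR2
  · rw [← mulVec_mulVec, hact]
    exact sstep i0 k0 al be hnorm

lemma Pa_self_eq (v : Vc p q) :
    Pa v v = ((∑ k : Fin p ⊕ Fin p, Complex.normSq (v (Sum.inl k)) : ℝ) : ℂ) -
      ((∑ k : Fin q ⊕ Fin q, Complex.normSq (v (Sum.inr k)) : ℝ) : ℂ) := by
  rw [Pa_coord]
  simp only [conj_mul_self]
  push_cast
  ring

lemma star_inv_ofReal (s : ℝ) : star (((s : ℂ))⁻¹) = ((s : ℂ))⁻¹ := by
  rw [star_inv₀, star_ofReal]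

lemma reach (v : Vc p q) (hv : v ≠ 0) (hiso : Pa v v = 0) :
    ∃ A B : Mx p q, InG A ∧ InG B ∧ B * A = 1 ∧ A *ᵥ v = cv i0 k0 := by
  by_cases h0 : Pa (cv i0 k0) v = 0 ∧ Pa (sg (cv i0 k0)) v = 0
  case neg => exact reach1 i0 k0 v hiso h0
  -- hard case : v pairs to zero with the canonical quaternionic line
  obtain ⟨ha, hb⟩ := h0
  set a0 : ℂ := v (Sum.inl (Sum.inl i0)) with ha0def
  set b0 : ℂ := v (Sum.inl (Sum.inr i0)) with hb0def
  have hPacv : Pa (cv i0 k0) v = a0 - v (Sum.inr (Sum.inl k0)) := by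
    rw [cv, Pa_add_left, Pa_bv_inl, Pa_bv_inr, ha0def, sub_eq_add_neg]
  have hPasgcv : Pa (sg (cv i0 k0)) v = -b0 + v (Sum.inr (Sum.inr k0)) := by
    rw [sg_cv, Pa_neg_left, Pa_add_left, Pa_bv_inl, Pa_bv_inr, hb0def]
    ring
  have ha0 : v (Sum.inr (Sum.inl k0)) = a0 := by
    rw [hPacv] at ha
    linear_combination -ha
  have hb0 : v (Sum.inr (Sum.inr k0)) = b0 := by
    rw [hPasgcv] at hb
    linear_combination hb
  set sq : ℝ := ∑ k : Fin q ⊕ Fin q, Complex.normSq (v (Sum.inr k)) with hsqdef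
  have hsq_nonneg : 0 ≤ sq := Finset.sum_nonneg fun _ _ => Complex.normSq_nonneg _
  have hsq_pos : 0 < sq := by
    rcases lt_or_eq_of_le hsq_nonneg with h | h
    · exact h
    · exfalso
      have hq0 : ∀ k : Fin q ⊕ Fin q, v (Sum.inr k) = 0 := by
        intro k
        have := (Finset.sum_eq_zero_iff_of_nonneg
          (fun j _ => Complex.normSq_nonneg (v (Sum.inr j)))).mp h.symm k (Finset.mem_univ k)
        exact Complex.normSq_eq_zero.mp this
      have hp0 : ∑ k : Fin p ⊕ Fin p, Complex.normSq (v (Sum.inl k)) = 0 := by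
        have h2 := hiso
        rw [Pa_self_eq, ← hsqdef, ← h] at h2
        have h3 : ((∑ k : Fin p ⊕ Fin p, Complex.normSq (v (Sum.inl k)) : ℝ) : ℂ) = 0 := by
          push_cast at h2 ⊢
          linear_combination h2
        exact_mod_cast h3
      have hp0' : ∀ k : Fin p ⊕ Fin p, v (Sum.inl k) = 0 := by
        intro k
        have := (Finset.sum_eq_zero_iff_of_nonneg
          (fun j _ => Complex.normSq_nonneg (v (Sum.inl j)))).mp hp0 k (Finset.mem_univ k)
        exact Complex.normSq_eq_zero.mp this
      apply hv
      funext i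
      rcases i with k | k
      · exact hp0' k
      · exact hq0 k
  set s : ℝ := Real.sqrt sq with hsdef
  have hs_pos : 0 < s := Real.sqrt_pos.mpr hsq_pos
  have hsC : ((s : ℂ)) ≠ 0 := by simpa using ne_of_gt hs_pos
  have hs2 : ((s : ℂ)) * s = ((sq : ℝ) : ℂ) := by
    rw [← Complex.ofReal_mul, Real.mul_self_sqrt hsq_nonneg]
  set d : Vc p q := Sum.elim (fun _ => (0 : ℂ)) (fun k => v (Sum.inr k)) with hddef
  have hPadv : Pa d v = -((sq : ℝ) : ℂ) := by
    rw [Pa_coord]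
    simp only [hddef, Sum.elim_inl, Sum.elim_inr, star_zero, zero_mul,
      Finset.sum_const_zero, conj_mul_self]
    rw [hsqdef]
    push_cast
    ring
  have hPadd : Pa d d = -((sq : ℝ) : ℂ) := by
    rw [Pa_coord]
    simp only [hddef, Sum.elim_inl, Sum.elim_inr, star_zero, zero_mul,
      Finset.sum_const_zero, conj_mul_self]
    rw [hsqdef]
    push_cast
    ring
  have hPasgdv : Pa (sg d) v = 0 := by
    rw [Pa_coord, Fintype.sum_sum_type, Fintype.sum_sum_type]
    simp only [sg_ll, sg_lr, sg_rl, sg_rr, hddef, Sum.elim_inl, Sum.elim_inr, star_zero,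
      star_star, star_neg, zero_mul, neg_mul, Finset.sum_const_zero, neg_zero, add_zero,
      zero_add, Finset.sum_neg_distrib]
    rw [show ∑ i : Fin q, v (Sum.inr (Sum.inr i)) * v (Sum.inr (Sum.inl i)) =
        ∑ i : Fin q, v (Sum.inr (Sum.inl i)) * v (Sum.inr (Sum.inr i)) from
      Finset.sum_congr rfl fun i _ => mul_comm _ _]
    ring
  have hPaE1pv : Pa (bv (Sum.inl (Sum.inl i0)) : Vc p q) v = a0 := Pa_bv_inl _ v
  have hPasgE1pv : Pa (sg (bv (Sum.inl (Sum.inl i0)) : Vc p q)) v = -b0 := by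
    rw [sg_bv_p1, Pa_neg_left, Pa_bv_inl, hb0def]
  have hPaE1pd : Pa (bv (Sum.inl (Sum.inl i0)) : Vc p q) d = 0 := by
    rw [Pa_bv_inl, hddef]
    simp
  have hPadE1p : Pa d (bv (Sum.inl (Sum.inl i0)) : Vc p q) = 0 := by
    rw [← Pa_conj, hPaE1pd, star_zero]
  have hPaE1pE1p : Pa (bv (Sum.inl (Sum.inl i0)) : Vc p q) (bv (Sum.inl (Sum.inl i0))) = 1 := by
    rw [Pa_bv_inl, bv_apply, if_pos rfl]
  have hPacvE1p : Pa (cv i0 k0) (bv (Sum.inl (Sum.inl i0)) : Vc p q) = 1 := by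
    rw [cv, Pa_add_left, hPaE1pE1p, Pa_bv_inr, bv_apply]
    simp
  have hPacvd : Pa (cv i0 k0) d = -a0 := by
    rw [cv, Pa_add_left, Pa_bv_inl, Pa_bv_inr, hddef]
    simp [ha0]
  have hPasgcvE1p : Pa (sg (cv i0 k0)) (bv (Sum.inl (Sum.inl i0)) : Vc p q) = 0 := by
    rw [sg_cv, Pa_neg_left, Pa_add_left, Pa_bv_inl, Pa_bv_inr, bv_apply, bv_apply]
    simp
  have hPasgcvd : Pa (sg (cv i0 k0)) d = b0 := by
    rw [sg_cv, Pa_neg_left, Pa_add_left, Pa_bv_inl, Pa_bv_inr, hddef]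
    simp [hb0]
  -- choice of sign
  obtain ⟨e, he2, hes, hg0, hA0⟩ : ∃ e : ℂ, e * e = 1 ∧ star e = e ∧
      ¬(e * a0 - (s : ℂ) = 0 ∧ -(e * b0) = 0) ∧
      ¬(e - a0 * ((s : ℂ))⁻¹ = 0 ∧ b0 * ((s : ℂ))⁻¹ = 0) := by
    by_cases hcc : a0 = (s : ℂ) ∧ b0 = 0
    · refine ⟨-1, by ring, by simp, ?_, ?_⟩
      · rintro ⟨h1, -⟩
        rw [hcc.1] at h1
        exact hsC (by linear_combination (-1/2 : ℂ) * h1)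
      · rintro ⟨h1, -⟩
        rw [hcc.1, mul_inv_cancel₀ hsC] at h1
        norm_num at h1
    · refine ⟨1, by ring, by simp, ?_, ?_⟩
      · rintro ⟨h1, h2⟩
        exact hcc ⟨by linear_combination h1, by linear_combination -h2⟩
      · rintro ⟨h1, h2⟩
        refine hcc ⟨?_, ?_⟩
        · have := congrArg (fun x : ℂ => x * (s : ℂ)) h1
          simp only [sub_mul, one_mul, zero_mul, mul_assoc] at this
          rw [inv_mul_cancel₀ hsC, mul_one] at this
          linear_combination -this
        · rcases mul_eq_zero.mp h2 with h | h
          · exact h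
          · exact absurd h (inv_ne_zero hsC)
  -- the mediator vector
  set y : Vc p q := e • bv (Sum.inl (Sum.inl i0)) + ((s : ℂ))⁻¹ • d with hydef
  have hyy : Pa y y = 0 := by
    rw [hydef]
    simp only [Pa_add_left, Pa_add_right, Pa_smul_left, Pa_smul_right, hes,
      star_inv_ofReal, hPaE1pE1p, hPaE1pd, hPadE1p, hPadd]
    field_simp
    linear_combination ((s:ℂ) * s) * he2 + hs2
  have hgv : Pa y v = e * a0 - (s : ℂ) := by
    rw [hydef, Pa_add_left, Pa_smul_left, Pa_smul_left, hes, star_inv_ofReal, hPaE1pv,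
      hPadv, ← hs2]
    field_simp
    ring
  have hhv : Pa (sg y) v = -(e * b0) := by
    rw [hydef, sg_add, sg_smul, sg_smul, hes, star_inv_ofReal, Pa_add_left, Pa_smul_left,
      Pa_smul_left, hes, star_inv_ofReal, hPasgE1pv, hPasgdv]
    ring
  have hAy : Pa (cv i0 k0) y = e - a0 * ((s : ℂ))⁻¹ := by
    rw [hydef, Pa_add_right, Pa_smul_right, Pa_smul_right, hPacvE1p, hPacvd]
    ring
  have hBy : Pa (sg (cv i0 k0)) y = b0 * ((s : ℂ))⁻¹ := by
    rw [hydef, Pa_add_right, Pa_smul_right, Pa_smul_right, hPasgcvE1p, hPasgcvd]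
    ring
  -- first reflection : v ↦ v' on the quaternionic line of y
  have hghY : ¬(Pa y v = 0 ∧ Pa (sg y) v = 0) := by
    rw [hgv, hhv]
    exact hg0
  obtain ⟨R, al, be, hR, hR2, hnorm, hact⟩ := toLine v y hiso hyy hghY
  set v' : Vc p q := al • y + be • sg y with hv'def
  have hv'iso : Pa v' v' = 0 := Pa_combo_self y al be hyy
  have hv'c : ¬(Pa (cv i0 k0) v' = 0 ∧ Pa (sg (cv i0 k0)) v' = 0) := by
    apply combo_nonzero (cv i0 k0) y al be hnorm
    rw [hAy, hBy]
    exact hA0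
  obtain ⟨A2, B2, hA2, hB2, hBA2, hact2⟩ := reach1 i0 k0 v' hv'iso hv'c
  refine ⟨A2 * R, R * B2, InG_mul hA2 hR, InG_mul hR hB2, ?_, ?_⟩
  · calc R * B2 * (A2 * R) = R * (B2 * A2) * R := by simp only [Matrix.mul_assoc]
      _ = R * R := by rw [hBA2, Matrix.mul_one]
      _ = 1 := hR2
  · rw [← mulVec_mulVec, hact, hact2]
end Stmt8Aux

/-- Let `p, q ≥ 1` and `N = 2p + 2q` (coordinates indexed by
`(Fin p ⊕ Fin p) ⊕ (Fin q ⊕ Fin q)`, the first `2p` followed by the last `2q`).  Let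
`H = diag(I_{2p}, −I_{2q})` and `Ω = diag(J_{2p}, −J_{2q})`.  Then
`G = {A ∈ GL_N(ℂ) : Aᴴ H A = H, Aᵀ Ω A = Ω}` (a realization of `Sp(2p,2q)`) acts
transitively on the set of isotropic points of `ℙ(ℂ^N)`. -/
theorem stmt8 (p q : ℕ) (hp : 1 ≤ p) (hq : 1 ≤ q)
    (v w : ((Fin p ⊕ Fin p) ⊕ (Fin q ⊕ Fin q)) → ℂ) (hv : v ≠ 0) (hw : w ≠ 0)
    (hviso : ∑ i : Fin p ⊕ Fin p, Complex.normSq (v (Sum.inl i)) =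
             ∑ j : Fin q ⊕ Fin q, Complex.normSq (v (Sum.inr j)))
    (hwiso : ∑ i : Fin p ⊕ Fin p, Complex.normSq (w (Sum.inl i)) =
             ∑ j : Fin q ⊕ Fin q, Complex.normSq (w (Sum.inr j))) :
    ∃ A : Matrix ((Fin p ⊕ Fin p) ⊕ (Fin q ⊕ Fin q)) ((Fin p ⊕ Fin p) ⊕ (Fin q ⊕ Fin q)) ℂ,
      IsUnit A.det ∧
      Aᴴ * Matrix.fromBlocks 1 0 0 (-1) * A = Matrix.fromBlocks 1 0 0 (-1) ∧
      Aᵀ * Matrix.fromBlocks (sympJ p) 0 0 (-(sympJ q)) * A =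
        Matrix.fromBlocks (sympJ p) 0 0 (-(sympJ q)) ∧
      ∃ lam : ℂ, lam ≠ 0 ∧ A.mulVec v = lam • w := by
  have hPav : Stmt8Aux.Pa v v = 0 := by
    rw [Stmt8Aux.Pa_self_eq, hviso]
    ring
  have hPaw : Stmt8Aux.Pa w w = 0 := by
    rw [Stmt8Aux.Pa_self_eq, hwiso]
    ring
  obtain ⟨Av, Bv, hAv, hBv, hBAv, hv1⟩ :=
    Stmt8Aux.reach (⟨0, hp⟩ : Fin p) (⟨0, hq⟩ : Fin q) v hv hPav
  obtain ⟨Aw, Bw, hAw, hBw, hBAw, hw1⟩ :=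
    Stmt8Aux.reach (⟨0, hp⟩ : Fin p) (⟨0, hq⟩ : Fin q) w hw hPaw
  have hA : Stmt8Aux.InG (Bw * Av) := Stmt8Aux.InG_mul hBw hAv
  refine ⟨Bw * Av, hA.det_isUnit, hA.1, hA.symplectic, 1, one_ne_zero, ?_⟩
  rw [one_smul, ← Matrix.mulVec_mulVec, hv1, ← hw1, Matrix.mulVec_mulVec, hBAw,
    Matrix.one_mulVec]
end

section
/- Let p, q ≥ 1 and N = 2p + 2q. Let K be the group of block-diagonal N×N complex matrices diag(A, B) where A ∈ Sp_{2p}(ℂ) ∩ U(2p) (i.e. A is a 2p×2p unitary matrix with Aᵀ J_{2p} A = J_{2p}, J_{2k} = [[0, I_k], [−I_k, 0]]) and B ∈ Sp_{2q}(ℂ) ∩ U(2q). Then K acts transitively on the set of isotropic points {[v] ∈ ℙ(ℂ^N) : Σ_{i<2p}|v_i|² = Σ_{i≥2p}|v_i|²}. -/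
open scoped Matrix

namespace Stmt9Aux

open Matrix

set_option linter.unusedSectionVars false

variable {k : ℕ} {m n o : Type*} [Fintype m] [Fintype n] [Fintype o]

lemma vvm_mul_vvm (x : m → ℂ) (y z : n → ℂ) (w : o → ℂ) :
    vecMulVec x y * vecMulVec z w = (y ⬝ᵥ z) • vecMulVec x w := by
  ext i j
  simp only [mul_apply, vecMulVec_apply, Matrix.smul_apply, dotProduct, smul_eq_mul,
    Finset.sum_mul]

  exact Finset.sum_congr rfl fun l _ => by ring

lemma mul_vvm (M : Matrix m n ℂ) (x : n → ℂ) (y : o → ℂ) :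
    M * vecMulVec x y = vecMulVec (M *ᵥ x) y := by
  ext i j
  simp only [mul_apply, vecMulVec_apply, mulVec, dotProduct, Finset.sum_mul]
  exact Finset.sum_congr rfl fun l _ => by ring

lemma vvm_mul (M : Matrix n o ℂ) (x : m → ℂ) (y : n → ℂ) :
    vecMulVec x y * M = vecMulVec x (y ᵥ* M) := by
  ext i j
  simp only [mul_apply, vecMulVec_apply, vecMul, dotProduct, Finset.mul_sum]
  exact Finset.sum_congr rfl fun l _ => by ring

lemma vvm_transpose (x : m → ℂ) (y : n → ℂ) :
    (vecMulVec x y)ᵀ = vecMulVec y x := by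
  ext i j; simp [vecMulVec_apply, mul_comm]

lemma vvm_conjTranspose (x : m → ℂ) (y : n → ℂ) :
    (vecMulVec x y)ᴴ = vecMulVec (star y) (star x) := by
  ext i j; simp [vecMulVec_apply, conjTranspose_apply, mul_comm]

lemma vvm_mulVec (x : m → ℂ) (y : n → ℂ) (z : n → ℂ) :
    (vecMulVec x y) *ᵥ z = (y ⬝ᵥ z) • x := by
  ext i
  simp only [mulVec, vecMulVec_apply, dotProduct, Pi.smul_apply, smul_eq_mul, Finset.sum_mul]

  exact Finset.sum_congr rfl fun l _ => by ring

lemma vvm_neg_left (x : m → ℂ) (y : n → ℂ) :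
    vecMulVec (-x) y = -vecMulVec x y := by
  ext i j; simp [vecMulVec_apply]


lemma sympJ_mulVec (x : Fin k ⊕ Fin k → ℂ) :
    (sympJ k) *ᵥ x = Sum.elim (fun i => x (Sum.inr i)) (fun i => -x (Sum.inl i)) := by
  funext i
  cases i with
  | inl i =>
    simp [sympJ, mulVec, dotProduct, Fintype.sum_sum_type, one_apply, Finset.sum_ite_eq,
      Matrix.fromBlocks_apply₁₁, Matrix.fromBlocks_apply₁₂]
  | inr i =>
    simp [sympJ, mulVec, dotProduct, Fintype.sum_sum_type, one_apply, Finset.sum_ite_eq,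
      Matrix.fromBlocks_apply₂₁, Matrix.fromBlocks_apply₂₂]

lemma sympJ_mul_self : sympJ k * sympJ k = (-1 : Matrix _ _ ℂ) := by
  simp [sympJ, Matrix.fromBlocks_multiply, ← Matrix.fromBlocks_one,
    Matrix.fromBlocks_neg]

lemma sympJ_transpose : (sympJ k)ᵀ = -sympJ k := by
  simp [sympJ, Matrix.fromBlocks_transpose, Matrix.fromBlocks_neg]

lemma star_sympJ_mulVec (x : Fin k ⊕ Fin k → ℂ) :
    star ((sympJ k) *ᵥ x) = (sympJ k) *ᵥ (star x) := by
  funext i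
  cases i <;> simp [sympJ_mulVec]

lemma sympJ_mulVec_mulVec (x : Fin k ⊕ Fin k → ℂ) :
    (sympJ k) *ᵥ ((sympJ k) *ᵥ x) = -x := by
  funext i; cases i <;> simp [sympJ_mulVec]

lemma dot_sympJ_self (x : Fin k ⊕ Fin k → ℂ) :
    x ⬝ᵥ ((sympJ k) *ᵥ x) = 0 := by
  simp only [sympJ_mulVec, dotProduct, Fintype.sum_sum_type, Sum.elim_inl, Sum.elim_inr]
  rw [← Finset.sum_add_distrib]
  apply Finset.sum_eq_zero
  intro i _; ring

lemma sympJ_mulVec_dot_self (x : Fin k ⊕ Fin k → ℂ) :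
    ((sympJ k) *ᵥ x) ⬝ᵥ x = 0 := by
  rw [dotProduct_comm, dot_sympJ_self]

lemma vecMul_sympJ (y : Fin k ⊕ Fin k → ℂ) :
    y ᵥ* sympJ k = -((sympJ k) *ᵥ y) := by
  rw [← Matrix.mulVec_transpose, sympJ_transpose, Matrix.neg_mulVec]

lemma sympJ_dot (x y : Fin k ⊕ Fin k → ℂ) :
    ((sympJ k) *ᵥ x) ⬝ᵥ y = ∑ i : Fin k, (x (Sum.inr i) * y (Sum.inl i) - x (Sum.inl i) * y (Sum.inr i)) := by
  simp only [sympJ_mulVec, dotProduct, Fintype.sum_sum_type, Sum.elim_inl, Sum.elim_inr]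
  rw [← Finset.sum_add_distrib]
  exact Finset.sum_congr rfl fun i _ => by ring


lemma vvm_neg_right (x : m → ℂ) (y : n → ℂ) :
    vecMulVec x (-y) = -vecMulVec x y := by
  ext i j; simp [vecMulVec_apply]

/-- `b = J ū`, the quaternionic companion of `u`. -/
noncomputable def hb (k : ℕ) (u : Fin k ⊕ Fin k → ℂ) : Fin k ⊕ Fin k → ℂ := (sympJ k) *ᵥ (star u)

/-- Quaternionic Householder reflection attached to `u`. -/
noncomputable def hH (k : ℕ) (u : Fin k ⊕ Fin k → ℂ) : Matrix (Fin k ⊕ Fin k) (Fin k ⊕ Fin k) ℂ :=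
  1 - (2 / (star u ⬝ᵥ u)) •
    (vecMulVec u (star u) + vecMulVec (hb k u) (star (hb k u)))

variable (u : Fin k ⊕ Fin k → ℂ)

lemma star_hb : star (hb k u) = (sympJ k) *ᵥ u := by
  rw [hb, star_sympJ_mulVec, star_star]

lemma dot_hb_hb : star (hb k u) ⬝ᵥ hb k u = star u ⬝ᵥ u := by
  rw [star_hb, hb, sympJ_dot]
  simp only [sympJ_mulVec, Sum.elim_inl, Sum.elim_inr, dotProduct, Fintype.sum_sum_type,
    Pi.star_apply, mul_neg, sub_neg_eq_add]
  rw [← Finset.sum_add_distrib]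
  exact Finset.sum_congr rfl fun i _ => by ring

lemma dot_u_hb : star u ⬝ᵥ hb k u = 0 := dot_sympJ_self (star u)

lemma dot_hb_u : star (hb k u) ⬝ᵥ u = 0 := by
  rw [star_hb]; exact sympJ_mulVec_dot_self u

lemma star_dot_self : star (star u ⬝ᵥ u) = star u ⬝ᵥ u := by
  simp only [dotProduct, star_sum, star_mul', star_star, Pi.star_apply]
  exact Finset.sum_congr rfl fun i _ => mul_comm _ _

lemma star_coeff : star (2 / (star u ⬝ᵥ u)) = 2 / (star u ⬝ᵥ u) := by
  rw [star_div₀, star_dot_self]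
  norm_num

lemma hH_conjTranspose : (hH k u)ᴴ = hH k u := by
  rw [hH, conjTranspose_sub, conjTranspose_one, conjTranspose_smul, conjTranspose_add,
    vvm_conjTranspose, vvm_conjTranspose, star_star, star_star, star_coeff]

lemma hP_mul_hP :
    (vecMulVec u (star u) + vecMulVec (hb k u) (star (hb k u))) *
      (vecMulVec u (star u) + vecMulVec (hb k u) (star (hb k u))) =
    (star u ⬝ᵥ u) • (vecMulVec u (star u) + vecMulVec (hb k u) (star (hb k u))) := by
  rw [add_mul, mul_add, mul_add, vvm_mul_vvm, vvm_mul_vvm, vvm_mul_vvm, vvm_mul_vvm,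
    dot_u_hb, dot_hb_u, dot_hb_hb, zero_smul, zero_smul, add_zero, zero_add, smul_add]

lemma hH_unitary (hn : star u ⬝ᵥ u ≠ 0) : (hH k u)ᴴ * hH k u = 1 := by
  rw [hH_conjTranspose]
  set n := star u ⬝ᵥ u with hndef
  set c : ℂ := 2 / n with hcdef
  set P := vecMulVec u (star u) + vecMulVec (hb k u) (star (hb k u)) with hPdef
  have hPP : P * P = n • P := hP_mul_hP u
  have hc : c * (c * n) = c + c := by
    rw [hcdef]; field_simp; ring
  have hY : (c * (c * n)) • P = c • P + c • P := by rw [← add_smul, hc]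
  have hXX : (c • P) * (c • P) = (c * (c * n)) • P := by
    rw [smul_mul_assoc, Matrix.mul_smul, hPP, smul_smul, smul_smul, mul_assoc]
  rw [hH, ← hndef, ← hcdef, ← hPdef, mul_sub, sub_mul, sub_mul, hXX, hY]
  simp only [one_mul, mul_one]
  abel

lemma hJP :
    sympJ k * (vecMulVec u (star u) + vecMulVec (hb k u) (star (hb k u))) =
      vecMulVec (star (hb k u)) (star u) - vecMulVec (star u) (star (hb k u)) := by
  rw [mul_add, mul_vvm, mul_vvm, ← star_hb]
  have h2 : (sympJ k) *ᵥ (hb k u) = -(star u) := by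
    rw [hb, sympJ_mulVec_mulVec]
  rw [h2, vvm_neg_left, sub_eq_add_neg]

lemma hPtJ :
    (vecMulVec u (star u) + vecMulVec (hb k u) (star (hb k u)))ᵀ * sympJ k =
      vecMulVec (star (hb k u)) (star u) - vecMulVec (star u) (star (hb k u)) := by
  rw [transpose_add, vvm_transpose, vvm_transpose, add_mul, vvm_mul, vvm_mul,
    vecMul_sympJ, vecMul_sympJ, ← star_hb]
  have h2 : (sympJ k) *ᵥ (hb k u) = -(star u) := by
    rw [hb, sympJ_mulVec_mulVec]
  rw [h2, neg_neg, vvm_neg_right, sub_eq_add_neg, add_comm]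

lemma hDP :
    (vecMulVec (star (hb k u)) (star u) - vecMulVec (star u) (star (hb k u))) *
      (vecMulVec u (star u) + vecMulVec (hb k u) (star (hb k u))) =
    (star u ⬝ᵥ u) •
      (vecMulVec (star (hb k u)) (star u) - vecMulVec (star u) (star (hb k u))) := by
  rw [sub_mul, mul_add, mul_add, vvm_mul_vvm, vvm_mul_vvm, vvm_mul_vvm, vvm_mul_vvm,
    dot_u_hb, dot_hb_u, dot_hb_hb, zero_smul, zero_smul, add_zero, zero_add, smul_sub]

lemma hH_symplectic (hn : star u ⬝ᵥ u ≠ 0) :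
    (hH k u)ᵀ * sympJ k * hH k u = sympJ k := by
  set n := star u ⬝ᵥ u with hndef
  set c : ℂ := 2 / n with hcdef
  set P := vecMulVec u (star u) + vecMulVec (hb k u) (star (hb k u)) with hPdef
  set D := vecMulVec (star (hb k u)) (star u) - vecMulVec (star u) (star (hb k u)) with hDdef
  have h1 : P ᵀ * sympJ k = D := hPtJ u
  have h2 : sympJ k * P = D := hJP u
  have h3 : D * P = n • D := hDP u
  have hc : c * (c * n) = c + c := by
    rw [hcdef]; field_simp; ring
  have hY : (c * (c * n)) • D = c • D + c • D := by rw [← add_smul, hc]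
  have hXX : (c • D) * (c • P) = (c * (c * n)) • D := by
    rw [smul_mul_assoc, Matrix.mul_smul, h3, smul_smul, smul_smul, mul_assoc]
  have hJX : sympJ k * (c • P) = c • D := by rw [Matrix.mul_smul, h2]
  rw [hH, ← hndef, ← hcdef, ← hPdef, transpose_sub, transpose_one, transpose_smul, sub_mul,
    one_mul, smul_mul_assoc, h1, mul_sub, sub_mul, sub_mul, hXX, hJX, hY]
  simp only [mul_one]
  abel

lemma hH_mulVec (x : Fin k ⊕ Fin k → ℂ) :
    hH k u *ᵥ x =
      x - (2 / (star u ⬝ᵥ u)) •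
        ((star u ⬝ᵥ x) • u + (star (hb k u) ⬝ᵥ x) • hb k u) := by
  rw [hH, Matrix.sub_mulVec, Matrix.one_mulVec, Matrix.smul_mulVec, Matrix.add_mulVec,
    vvm_mulVec, vvm_mulVec]


section QuatDiag

variable (c d : Fin k → ℂ)

/-- block matrix of "quaternionic diagonal" shape. -/
noncomputable def qd : Matrix (Fin k ⊕ Fin k) (Fin k ⊕ Fin k) ℂ :=
  fromBlocks (diagonal c) (diagonal d) (-(diagonal (star d))) (diagonal (star c))

lemma diag_one_of (h : ∀ j, star (c j) * c j + star (d j) * d j = 1) :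
    (diagonal (fun i => star c i * c i) + diagonal (fun i => d i * star d i)
      : Matrix (Fin k) (Fin k) ℂ) = 1 := by
  rw [diagonal_add, ← diagonal_one]
  exact congrArg diagonal (funext fun j => by
    simp only [Pi.star_apply]; linear_combination h j)

lemma diag_one_of' (h : ∀ j, star (c j) * c j + star (d j) * d j = 1) :
    (diagonal (fun i => star d i * d i) + diagonal (fun i => c i * star c i)
      : Matrix (Fin k) (Fin k) ℂ) = 1 := by
  rw [diagonal_add, ← diagonal_one]
  exact congrArg diagonal (funext fun j => by
    simp only [Pi.star_apply]; linear_combination h j)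

lemma diag_comm_zero (a b : Fin k → ℂ) :
    (diagonal (fun i => a i * b i) - diagonal (fun i => b i * a i)
      : Matrix (Fin k) (Fin k) ℂ) = 0 := by
  rw [diagonal_sub, ← diagonal_zero]
  exact congrArg diagonal (funext fun j => by ring)

lemma qd_unitary (h : ∀ j, star (c j) * c j + star (d j) * d j = 1) :
    (qd c d)ᴴ * qd c d = 1 := by
  have hQ : (qd c d)ᴴ =
      fromBlocks (diagonal (star c)) (-(diagonal d)) (diagonal (star d)) (diagonal c) := by
    rw [qd, fromBlocks_conjTranspose]
    simp only [conjTranspose_neg, diagonal_conjTranspose, star_star]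
  rw [hQ, qd, fromBlocks_multiply]
  have h11 : diagonal (star c) * diagonal c + -diagonal d * -diagonal (star d)
      = (1 : Matrix (Fin k) (Fin k) ℂ) := by
    rw [neg_mul_neg, diagonal_mul_diagonal, diagonal_mul_diagonal]
    exact diag_one_of c d h
  have h12 : diagonal (star c) * diagonal d + -diagonal d * diagonal (star c)
      = (0 : Matrix (Fin k) (Fin k) ℂ) := by
    rw [neg_mul, diagonal_mul_diagonal, diagonal_mul_diagonal, ← sub_eq_add_neg]
    exact diag_comm_zero _ _
  have h21 : diagonal (star d) * diagonal c + diagonal c * -diagonal (star d)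
      = (0 : Matrix (Fin k) (Fin k) ℂ) := by
    rw [mul_neg, diagonal_mul_diagonal, diagonal_mul_diagonal, ← sub_eq_add_neg]
    exact diag_comm_zero _ _
  have h22 : diagonal (star d) * diagonal d + diagonal c * diagonal (star c)
      = (1 : Matrix (Fin k) (Fin k) ℂ) := by
    rw [diagonal_mul_diagonal, diagonal_mul_diagonal]
    exact diag_one_of' c d h
  rw [h11, h12, h21, h22, fromBlocks_one]

lemma qd_symplectic (h : ∀ j, star (c j) * c j + star (d j) * d j = 1) :
    (qd c d)ᵀ * sympJ k * qd c d = sympJ k := by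
  have hQ : (qd c d)ᵀ =
      fromBlocks (diagonal c) (-(diagonal (star d))) (diagonal d) (diagonal (star c)) := by
    rw [qd, fromBlocks_transpose]
    simp only [transpose_neg, diagonal_transpose]
  rw [hQ, qd, sympJ, fromBlocks_multiply, fromBlocks_multiply]
  have e0 : ∀ M : Matrix (Fin k) (Fin k) ℂ, M * (0 : Matrix (Fin k) (Fin k) ℂ) = 0 :=
    fun M => Matrix.mul_zero M
  have h11 : (diagonal c * 0 + -diagonal (star d) * -1) * diagonal c +
      (diagonal c * 1 + -diagonal (star d) * 0) * -diagonal (star d)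
      = (0 : Matrix (Fin k) (Fin k) ℂ) := by
    simp only [Matrix.mul_zero, Matrix.mul_one, Matrix.neg_mul, Matrix.mul_neg, neg_neg,
      zero_add, add_zero]
    rw [diagonal_mul_diagonal, diagonal_mul_diagonal, ← sub_eq_add_neg]
    exact diag_comm_zero _ _
  have h12 : (diagonal c * 0 + -diagonal (star d) * -1) * diagonal d +
      (diagonal c * 1 + -diagonal (star d) * 0) * diagonal (star c)
      = (1 : Matrix (Fin k) (Fin k) ℂ) := by
    simp only [Matrix.mul_zero, Matrix.mul_one, Matrix.neg_mul, Matrix.mul_neg, neg_neg,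
      zero_add, add_zero]
    rw [diagonal_mul_diagonal, diagonal_mul_diagonal]
    exact diag_one_of' c d h
  have h21 : (diagonal d * 0 + diagonal (star c) * -1) * diagonal c +
      (diagonal d * 1 + diagonal (star c) * 0) * -diagonal (star d)
      = (-1 : Matrix (Fin k) (Fin k) ℂ) := by
    simp only [Matrix.mul_zero, Matrix.mul_one, Matrix.neg_mul, Matrix.mul_neg, neg_neg,
      zero_add, add_zero]
    rw [diagonal_mul_diagonal, diagonal_mul_diagonal, ← neg_add]
    rw [show ((diagonal fun i => star c i * c i) + diagonal fun i => d i * star d i)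
        = (1 : Matrix (Fin k) (Fin k) ℂ) from diag_one_of c d h]
  have h22 : (diagonal d * 0 + diagonal (star c) * -1) * diagonal d +
      (diagonal d * 1 + diagonal (star c) * 0) * diagonal (star c)
      = (0 : Matrix (Fin k) (Fin k) ℂ) := by
    simp only [Matrix.mul_zero, Matrix.mul_one, Matrix.neg_mul, Matrix.mul_neg, neg_neg,
      zero_add, add_zero]
    rw [diagonal_mul_diagonal, diagonal_mul_diagonal, neg_add_eq_sub]
    exact diag_comm_zero _ _
  rw [h11, h12, h21, h22]

end QuatDiag


lemma dot_star_self_eq (y : m → ℂ) :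
    star y ⬝ᵥ y = ((∑ i, Complex.normSq (y i) : ℝ) : ℂ) := by
  push_cast
  simp only [dotProduct, Pi.star_apply, Complex.star_def]
  exact Finset.sum_congr rfl fun i _ => Complex.normSq_eq_conj_mul_self.symm

lemma dot_star_self_ne {y : m → ℂ} (hy : y ≠ 0) : star y ⬝ᵥ y ≠ 0 := by
  rw [dot_star_self_eq]
  simp only [ne_eq, Complex.ofReal_eq_zero]
  intro h
  apply hy
  funext i
  have := (Finset.sum_eq_zero_iff_of_nonneg
    (fun i _ => Complex.normSq_nonneg (y i))).mp h i (Finset.mem_univ i)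
  exact Complex.normSq_eq_zero.mp this

lemma conjT_symplectic {A : Matrix (Fin k ⊕ Fin k) (Fin k ⊕ Fin k) ℂ}
    (h1 : Aᴴ * A = 1) (h2 : Aᵀ * sympJ k * A = sympJ k) :
    (Aᴴ)ᵀ * sympJ k * Aᴴ = sympJ k := by
  have hA : A * Aᴴ = 1 := mul_eq_one_comm.mp h1
  have e1 : (Aᴴ)ᵀ * Aᵀ = 1 := by rw [← Matrix.transpose_mul, hA, Matrix.transpose_one]
  calc (Aᴴ)ᵀ * sympJ k * Aᴴ = (Aᴴ)ᵀ * (Aᵀ * sympJ k * A) * Aᴴ := by rw [h2]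
    _ = (Aᴴ)ᵀ * Aᵀ * (sympJ k * (A * Aᴴ)) := by simp only [Matrix.mul_assoc]
    _ = sympJ k := by rw [e1, hA, Matrix.one_mul, Matrix.mul_one]

lemma reduce (i0 : Fin k) (x : Fin k ⊕ Fin k → ℂ) :
    ∃ A : Matrix (Fin k ⊕ Fin k) (Fin k ⊕ Fin k) ℂ,
      Aᴴ * A = 1 ∧ Aᵀ * sympJ k * A = sympJ k ∧
      A *ᵥ x = ((Real.sqrt (∑ i, Complex.normSq (x i)) : ℝ) : ℂ) •
        (Pi.single (Sum.inl i0) 1 : Fin k ⊕ Fin k → ℂ) := by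
  classical
  set nx : ℝ := ∑ i, Complex.normSq (x i) with hnxdef
  have hnx0 : 0 ≤ nx := Finset.sum_nonneg fun i _ => Complex.normSq_nonneg _
  set r : ℝ := Real.sqrt nx with hrdef
  have hr2 : r * r = nx := Real.mul_self_sqrt hnx0
  set x1 := x (Sum.inl i0) with hx1def
  set x2 := x (Sum.inr i0) with hx2def
  set s : ℝ := Complex.normSq x1 + Complex.normSq x2 with hsdef
  have hs0 : 0 ≤ s := add_nonneg (Complex.normSq_nonneg _) (Complex.normSq_nonneg _)
  set rs : ℝ := Real.sqrt s with hrsdef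
  have hrs2 : rs * rs = s := Real.mul_self_sqrt hs0
  obtain ⟨α, β, hab1, hab2, hab3⟩ :
      ∃ α β : ℂ, star α * α + star β * β = 1 ∧
        star α * x1 + star β * x2 = (rs : ℂ) ∧ β * x1 - α * x2 = 0 := by
    by_cases hsz : s = 0
    · have h12 := (add_eq_zero_iff_of_nonneg (Complex.normSq_nonneg x1)
        (Complex.normSq_nonneg x2)).mp hsz
      have h1 : x1 = 0 := Complex.normSq_eq_zero.mp h12.1
      have h2 : x2 = 0 := Complex.normSq_eq_zero.mp h12.2
      have hrs : rs = 0 := by rw [hrsdef, hsz, Real.sqrt_zero]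
      exact ⟨1, 0, by simp, by simp [h1, h2, hrs], by simp [h1, h2]⟩
    · have hspos : 0 < s := lt_of_le_of_ne hs0 (Ne.symm hsz)
      have hrspos : 0 < rs := Real.sqrt_pos.mpr hspos
      have hrsne : ((rs : ℝ) : ℂ) ≠ 0 := by
        simp only [ne_eq, Complex.ofReal_eq_zero]
        exact ne_of_gt hrspos
      have e1 : star ((rs : ℝ) : ℂ) = ((rs : ℝ) : ℂ) := by
        rw [Complex.star_def, Complex.conj_ofReal]
      have e2 : ((rs : ℝ) : ℂ) * ((rs : ℝ) : ℂ) = ((s : ℝ) : ℂ) := by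
        rw [← Complex.ofReal_mul, hrs2]
      have e3 : star x1 * x1 + star x2 * x2 = ((s : ℝ) : ℂ) := by
        rw [hsdef]
        push_cast
        simp only [Complex.star_def]
        rw [← Complex.normSq_eq_conj_mul_self, ← Complex.normSq_eq_conj_mul_self]
      refine ⟨x1 / ((rs : ℝ) : ℂ), x2 / ((rs : ℝ) : ℂ), ?_, ?_, ?_⟩
      · rw [star_div₀, star_div₀, e1, div_mul_div_comm, div_mul_div_comm,
          ← add_div, e2, e3, div_self]
        simp only [ne_eq, Complex.ofReal_eq_zero]
        exact hsz
      · rw [star_div₀, star_div₀, e1, div_mul_eq_mul_div, div_mul_eq_mul_div,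
          ← add_div, e3, ← e2, mul_div_assoc, div_self hrsne, mul_one]
      · field_simp
        ring
  set t : Fin k ⊕ Fin k → ℂ :=
    Sum.elim (fun j => if j = i0 then ((r : ℝ) : ℂ) * α else 0)
      (fun j => if j = i0 then ((r : ℝ) : ℂ) * β else 0) with htdef
  have ht1 : ∀ j, t (Sum.inl j) = if j = i0 then ((r : ℝ) : ℂ) * α else 0 := fun j => rfl
  have ht2 : ∀ j, t (Sum.inr j) = if j = i0 then ((r : ℝ) : ℂ) * β else 0 := fun j => rfl
  have hstar_r : star ((r : ℝ) : ℂ) = ((r : ℝ) : ℂ) := by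
    rw [Complex.star_def, Complex.conj_ofReal]
  have hcolL : ∀ f : Fin k ⊕ Fin k → ℂ,
      star t ⬝ᵥ f = star (((r : ℝ) : ℂ) * α) * f (Sum.inl i0) +
        star (((r : ℝ) : ℂ) * β) * f (Sum.inr i0) := by
    intro f
    simp only [dotProduct, Fintype.sum_sum_type, Pi.star_apply, ht1, ht2,
      apply_ite (star : ℂ → ℂ), star_zero, ite_mul, zero_mul]
    rw [Finset.sum_ite_eq' Finset.univ i0, Finset.sum_ite_eq' Finset.univ i0]
    simp
  have hcolR : ∀ f : Fin k ⊕ Fin k → ℂ,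
      star f ⬝ᵥ t = star (f (Sum.inl i0)) * (((r : ℝ) : ℂ) * α) +
        star (f (Sum.inr i0)) * (((r : ℝ) : ℂ) * β) := by
    intro f
    simp only [dotProduct, Fintype.sum_sum_type, Pi.star_apply, ht1, ht2,
      mul_ite, mul_zero]
    rw [Finset.sum_ite_eq' Finset.univ i0, Finset.sum_ite_eq' Finset.univ i0]
    simp
  have hJt : ((sympJ k) *ᵥ t) ⬝ᵥ x = 0 := by
    rw [sympJ_dot]
    simp only [ht1, ht2, ite_mul, zero_mul]
    rw [Finset.sum_sub_distrib, Finset.sum_ite_eq' Finset.univ i0,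
      Finset.sum_ite_eq' Finset.univ i0]
    simp only [Finset.mem_univ, if_true, ← hx1def, ← hx2def]
    linear_combination ((r : ℝ) : ℂ) * hab3
  have e_tx : star t ⬝ᵥ x = ((r * rs : ℝ) : ℂ) := by
    rw [hcolL x, star_mul', star_mul', hstar_r, ← hx1def, ← hx2def]
    push_cast
    linear_combination ((r : ℝ) : ℂ) * hab2
  have e_xt : star x ⬝ᵥ t = ((r * rs : ℝ) : ℂ) := by
    rw [hcolR x, ← hx1def, ← hx2def]
    have h2' := congrArg star hab2
    simp only [star_add, star_mul', star_star, Complex.star_def, Complex.conj_ofReal] at h2'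
    simp only [Complex.conj_conj] at h2'
    push_cast
    simp only [Complex.star_def]
    linear_combination ((r : ℝ) : ℂ) * h2'
  have e_tt : star t ⬝ᵥ t = ((nx : ℝ) : ℂ) := by
    rw [hcolL t, ht1, ht2, if_pos rfl, if_pos rfl, star_mul', star_mul', hstar_r]
    have hr2' : ((r : ℝ) : ℂ) * ((r : ℝ) : ℂ) = ((nx : ℝ) : ℂ) := by
      rw [← Complex.ofReal_mul, hr2]
    linear_combination (((r : ℝ) : ℂ) * ((r : ℝ) : ℂ)) * hab1 + hr2' 
  have e_xx : star x ⬝ᵥ x = ((nx : ℝ) : ℂ) := dot_star_self_eq x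
  set u : Fin k ⊕ Fin k → ℂ := x - t with hudef
  have e_ux : star u ⬝ᵥ x = ((nx : ℝ) : ℂ) - ((r * rs : ℝ) : ℂ) := by
    rw [hudef, star_sub, sub_dotProduct, e_xx, e_tx]
  have e_uu : star u ⬝ᵥ u = 2 * (((nx : ℝ) : ℂ) - ((r * rs : ℝ) : ℂ)) := by
    rw [hudef, star_sub, sub_dotProduct, dotProduct_sub,
      dotProduct_sub, e_xx, e_xt, e_tx, e_tt]
    ring
  set cf : Fin k → ℂ := fun j => if j = i0 then star α else 1 with hcfdef
  set df : Fin k → ℂ := fun j => if j = i0 then star β else 0 with hdfdef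
  have hcd : ∀ j, star (cf j) * cf j + star (df j) * df j = 1 := by
    intro j
    by_cases hj : j = i0
    · simp only [hcfdef, hdfdef, hj, if_pos rfl, star_star]
      linear_combination hab1
    · simp [hcfdef, hdfdef, hj]
  have hS1 : (qd cf df)ᴴ * qd cf df = 1 := qd_unitary cf df hcd
  have hS2 : (qd cf df)ᵀ * sympJ k * qd cf df = sympJ k := qd_symplectic cf df hcd
  have hSt : qd cf df *ᵥ t = ((r : ℝ) : ℂ) •
      (Pi.single (Sum.inl i0) 1 : Fin k ⊕ Fin k → ℂ) := by
    rw [qd, fromBlocks_mulVec]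
    funext i
    cases i with
    | inl i =>
      by_cases hj : i = i0
      · subst hj
        simp only [Sum.elim_inl, Pi.add_apply, Matrix.mulVec_diagonal, Function.comp_apply,
          ht1, ht2, hcfdef, hdfdef, Pi.smul_apply, Pi.single_apply, smul_eq_mul,
          eq_self_iff_true, if_true, star_star]
        linear_combination ((r : ℝ) : ℂ) * hab1
      · simp [Matrix.mulVec_diagonal, ht1, ht2, hj, hcfdef, hdfdef, Pi.single_apply,
          Sum.inl.injEq]
    | inr i =>
      by_cases hj : i = i0
      · subst hj
        simp only [Sum.elim_inr, Pi.add_apply, Matrix.neg_mulVec, Pi.neg_apply,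
          Matrix.mulVec_diagonal, Function.comp_apply, ht1, ht2, hcfdef, hdfdef,
          Pi.star_apply, star_star, Pi.smul_apply, Pi.single_apply, smul_eq_mul,
          eq_self_iff_true, if_true, reduceCtorEq, if_false, mul_zero]
        ring
      · simp [Matrix.neg_mulVec, Matrix.mulVec_diagonal, ht1, ht2, hj, hcfdef, hdfdef,
          Pi.single_apply]
  by_cases hu0 : u = 0
  · have hxt : x = t := by
      have := hu0
      rw [hudef, sub_eq_zero] at this
      exact this
    exact ⟨qd cf df, hS1, hS2, by rw [hxt]; exact hSt⟩
  · have hn : star u ⬝ᵥ u ≠ 0 := dot_star_self_ne hu0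
    have hbx : star (hb k u) ⬝ᵥ x = 0 := by
      rw [star_hb, hudef, Matrix.mulVec_sub, sub_dotProduct,
        sympJ_mulVec_dot_self, hJt, sub_zero]
    have hcoef : 2 / (star u ⬝ᵥ u) * (star u ⬝ᵥ x) = 1 := by
      have hm : ((nx : ℝ) : ℂ) - ((r * rs : ℝ) : ℂ) ≠ 0 := by
        intro hz
        apply hn
        rw [e_uu, hz, mul_zero]
      have h2m : (2 : ℂ) * (((nx : ℝ) : ℂ) - ((r * rs : ℝ) : ℂ)) ≠ 0 :=
        mul_ne_zero two_ne_zero hm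
      rw [e_uu, e_ux, div_mul_eq_mul_div, div_eq_one_iff_eq h2m]
    have hHx : hH k u *ᵥ x = t := by
      rw [hH_mulVec, hbx, zero_smul, add_zero, smul_smul, hcoef, one_smul, hudef,
        sub_sub_cancel]
    refine ⟨qd cf df * hH k u, ?_, ?_, ?_⟩
    · calc (qd cf df * hH k u)ᴴ * (qd cf df * hH k u)
          = (hH k u)ᴴ * ((qd cf df)ᴴ * qd cf df) * hH k u := by
            rw [conjTranspose_mul]
            simp only [Matrix.mul_assoc]
        _ = 1 := by rw [hS1, Matrix.mul_one, hH_unitary u hn]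
    · calc (qd cf df * hH k u)ᵀ * sympJ k * (qd cf df * hH k u)
          = (hH k u)ᵀ * ((qd cf df)ᵀ * (sympJ k * qd cf df)) * hH k u := by
            rw [transpose_mul]
            simp only [Matrix.mul_assoc]
        _ = (hH k u)ᵀ * sympJ k * hH k u := by
            rw [← Matrix.mul_assoc (qd cf df)ᵀ, hS2, Matrix.mul_assoc]
        _ = sympJ k := hH_symplectic u hn
    · rw [← Matrix.mulVec_mulVec, hHx, hSt]

lemma sp_trans (i0 : Fin k) (x y : Fin k ⊕ Fin k → ℂ)
    (h : ∑ i, Complex.normSq (x i) = ∑ i, Complex.normSq (y i)) :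
    ∃ A : Matrix (Fin k ⊕ Fin k) (Fin k ⊕ Fin k) ℂ,
      Aᴴ * A = 1 ∧ Aᵀ * sympJ k * A = sympJ k ∧ A *ᵥ x = y := by
  obtain ⟨Ax, hx1, hx2, hx3⟩ := reduce i0 x
  obtain ⟨Ay, hy1, hy2, hy3⟩ := reduce i0 y
  refine ⟨Ayᴴ * Ax, ?_, ?_, ?_⟩
  · calc (Ayᴴ * Ax)ᴴ * (Ayᴴ * Ax)
        = Axᴴ * ((Ayᴴ)ᴴ * Ayᴴ) * Ax := by
          rw [conjTranspose_mul]
          simp only [Matrix.mul_assoc]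
      _ = 1 := by
          rw [conjTranspose_conjTranspose, mul_eq_one_comm.mp hy1, Matrix.mul_one,
            hx1]
  · calc (Ayᴴ * Ax)ᵀ * sympJ k * (Ayᴴ * Ax)
        = Axᵀ * ((Ayᴴ)ᵀ * (sympJ k * Ayᴴ)) * Ax := by
          rw [transpose_mul]
          simp only [Matrix.mul_assoc]
      _ = Axᵀ * sympJ k * Ax := by
          rw [← Matrix.mul_assoc ((Ayᴴ)ᵀ), conjT_symplectic hy1 hy2, Matrix.mul_assoc]
      _ = sympJ k := hx2
  · rw [← Matrix.mulVec_mulVec, hx3, h, ← hy3, Matrix.mulVec_mulVec, hy1,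
      Matrix.one_mulVec]

end Stmt9Aux

/-- Let `p, q ≥ 1` and `N = 2p + 2q` (coordinates indexed by
`(Fin p ⊕ Fin p) ⊕ (Fin q ⊕ Fin q)`).  The group `K` of block-diagonal matrices
`diag(A, B)` with `A ∈ Sp_{2p}(ℂ) ∩ U(2p)` and `B ∈ Sp_{2q}(ℂ) ∩ U(2q)` acts transitively
on the set of isotropic points `{[v] ∈ ℙ(ℂ^N) : Σ_{i<2p}|v_i|² = Σ_{i≥2p}|v_i|²}`. -/
theorem stmt9 (p q : ℕ) (hp : 1 ≤ p) (hq : 1 ≤ q)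
    (v w : ((Fin p ⊕ Fin p) ⊕ (Fin q ⊕ Fin q)) → ℂ) (hv : v ≠ 0) (hw : w ≠ 0)
    (hviso : ∑ i : Fin p ⊕ Fin p, Complex.normSq (v (Sum.inl i)) =
             ∑ j : Fin q ⊕ Fin q, Complex.normSq (v (Sum.inr j)))
    (hwiso : ∑ i : Fin p ⊕ Fin p, Complex.normSq (w (Sum.inl i)) =
             ∑ j : Fin q ⊕ Fin q, Complex.normSq (w (Sum.inr j))) :
    ∃ (A : Matrix (Fin p ⊕ Fin p) (Fin p ⊕ Fin p) ℂ)
      (B : Matrix (Fin q ⊕ Fin q) (Fin q ⊕ Fin q) ℂ),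
      Aᴴ * A = 1 ∧ Aᵀ * sympJ p * A = sympJ p ∧
      Bᴴ * B = 1 ∧ Bᵀ * sympJ q * B = sympJ q ∧
      ∃ lam : ℂ, lam ≠ 0 ∧ (Matrix.fromBlocks A 0 0 B).mulVec v = lam • w := by
  classical
  set nv : ℝ := ∑ i : Fin p ⊕ Fin p, Complex.normSq (v (Sum.inl i)) with hnv
  set nw : ℝ := ∑ i : Fin p ⊕ Fin p, Complex.normSq (w (Sum.inl i)) with hnw
  have hkey : ∀ z : ((Fin p ⊕ Fin p) ⊕ (Fin q ⊕ Fin q)) → ℂ, z ≠ 0 →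
      (∑ i : Fin p ⊕ Fin p, Complex.normSq (z (Sum.inl i)) =
        ∑ j : Fin q ⊕ Fin q, Complex.normSq (z (Sum.inr j))) →
      0 < ∑ i : Fin p ⊕ Fin p, Complex.normSq (z (Sum.inl i)) := by
    intro z hz hiso
    by_contra hle
    push_neg at hle
    have h0 : ∑ i : Fin p ⊕ Fin p, Complex.normSq (z (Sum.inl i)) = 0 :=
      le_antisymm hle (Finset.sum_nonneg fun i _ => Complex.normSq_nonneg _)
    apply hz
    funext i
    cases i with
    | inl i =>
      exact Complex.normSq_eq_zero.mp ((Finset.sum_eq_zero_iff_of_nonneg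
        (fun i _ => Complex.normSq_nonneg _)).mp h0 i (Finset.mem_univ i))
    | inr i =>
      have h0' : ∑ j : Fin q ⊕ Fin q, Complex.normSq (z (Sum.inr j)) = 0 := by
        rw [← hiso]; exact h0
      exact Complex.normSq_eq_zero.mp ((Finset.sum_eq_zero_iff_of_nonneg
        (fun i _ => Complex.normSq_nonneg _)).mp h0' i (Finset.mem_univ i))
  have hvpos : 0 < nv := hkey v hv hviso
  have hwpos : 0 < nw := hkey w hw hwiso
  set l : ℝ := Real.sqrt nv / Real.sqrt nw with hldef
  have hl0 : 0 < l := div_pos (Real.sqrt_pos.mpr hvpos) (Real.sqrt_pos.mpr hwpos)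
  have hl2 : l * l * nw = nv := by
    have h1 : l * l = nv / nw := by
      rw [hldef, div_mul_div_comm, Real.mul_self_sqrt hvpos.le, Real.mul_self_sqrt hwpos.le]
    rw [h1, div_mul_cancel₀ _ (ne_of_gt hwpos)]
  have hsum1 : ∑ i : Fin p ⊕ Fin p, Complex.normSq (v (Sum.inl i)) =
      ∑ i : Fin p ⊕ Fin p, Complex.normSq (((l : ℝ) : ℂ) * w (Sum.inl i)) := by
    have : ∀ i : Fin p ⊕ Fin p, Complex.normSq (((l : ℝ) : ℂ) * w (Sum.inl i)) =
        l * l * Complex.normSq (w (Sum.inl i)) := by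
      intro i; rw [Complex.normSq_mul, Complex.normSq_ofReal]
    rw [Finset.sum_congr rfl fun i _ => this i, ← Finset.mul_sum, ← hnw, hl2]
  have hsum2 : ∑ i : Fin q ⊕ Fin q, Complex.normSq (v (Sum.inr i)) =
      ∑ i : Fin q ⊕ Fin q, Complex.normSq (((l : ℝ) : ℂ) * w (Sum.inr i)) := by
    have : ∀ i : Fin q ⊕ Fin q, Complex.normSq (((l : ℝ) : ℂ) * w (Sum.inr i)) =
        l * l * Complex.normSq (w (Sum.inr i)) := by
      intro i; rw [Complex.normSq_mul, Complex.normSq_ofReal]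
    rw [Finset.sum_congr rfl fun i _ => this i, ← Finset.mul_sum, ← hwiso, hl2, ← hviso]
  obtain ⟨A, hA1, hA2, hA3⟩ := Stmt9Aux.sp_trans (⟨0, hp⟩ : Fin p)
    (fun i => v (Sum.inl i)) (fun i => ((l : ℝ) : ℂ) * w (Sum.inl i)) hsum1
  obtain ⟨B, hB1, hB2, hB3⟩ := Stmt9Aux.sp_trans (⟨0, hq⟩ : Fin q)
    (fun i => v (Sum.inr i)) (fun i => ((l : ℝ) : ℂ) * w (Sum.inr i)) hsum2
  refine ⟨A, B, hA1, hA2, hB1, hB2, ((l : ℝ) : ℂ), ?_, ?_⟩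
  · simp only [ne_eq, Complex.ofReal_eq_zero]
    exact ne_of_gt hl0
  · have hv' : v = Sum.elim (fun i => v (Sum.inl i)) (fun i => v (Sum.inr i)) := by
      funext i; cases i <;> rfl
    rw [hv', Matrix.fromBlocks_mulVec]
    funext i
    cases i with
    | inl i =>
      have : (Sum.elim (fun i => v (Sum.inl i)) (fun i => v (Sum.inr i)) ∘ Sum.inl) =
          fun i => v (Sum.inl i) := by funext j; rfl
      simp only [Sum.elim_inl, Pi.add_apply, Matrix.zero_mulVec, Pi.zero_apply, add_zero,
        this, hA3, Pi.smul_apply, smul_eq_mul]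
    | inr i =>
      have : (Sum.elim (fun i => v (Sum.inl i)) (fun i => v (Sum.inr i)) ∘ Sum.inr) =
          fun i => v (Sum.inr i) := by funext j; rfl
      simp only [Sum.elim_inr, Pi.add_apply, Matrix.zero_mulVec, Pi.zero_apply, zero_add,
        this, hB3, Pi.smul_apply, smul_eq_mul]
end
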